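/- arXiv:2503.14157 — 9 statements merged into one kernel-verified Lean document; each statement's English description precedes it below -/
import Mathlib

section
/- If f(z) = ∑_{n≥0} a_n z^n is an entire power series in the class K (radius of convergence R = ∞), then sup_{t>0} σ_f²(t) ≥ gap(f)²/4 (in particular sup_{t>0} σ_f²(t) ≥ 1/4). If, moreover, f is transcendental (not a polynomial), then limsup_{t→∞} σ_f²(t) ≥ gap̄(f)²/4 (in particular limsup_{t→∞} σ_f²(t) ≥ 1/4). -/
open Filter Topology MeasureTheory
open scoped ENNReal NNReal Classical

noncomputable section

/-- `psum a t = ∑ aₙ tⁿ`, the value `f(t)` of the power series with coefficients `a`. -/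
def psum (a : ℕ → ℝ) (t : ℝ) : ℝ := ∑' n : ℕ, a n * t ^ n

/-- The mean `m_f(t)` of the Khinchin family of the power series with coefficients `a`. -/
def meanK (a : ℕ → ℝ) (t : ℝ) : ℝ :=
  (∑' n : ℕ, (n : ℝ) * a n * t ^ n) / ∑' n : ℕ, a n * t ^ n

/-- The variance `σ_f²(t)` of the Khinchin family. -/
def varK (a : ℕ → ℝ) (t : ℝ) : ℝ :=
  (∑' n : ℕ, (n : ℝ) ^ 2 * a n * t ^ n) / (∑' n : ℕ, a n * t ^ n) - meanK a t ^ 2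

/-- The standard deviation `σ_f(t)` of the Khinchin family. -/
def sdK (a : ℕ → ℝ) (t : ℝ) : ℝ := Real.sqrt (varK a t)

/-- The moment `E(X_t^p)` of real exponent `p` of the Khinchin family. -/
def momK (a : ℕ → ℝ) (p : ℝ) (t : ℝ) : ℝ :=
  (∑' n : ℕ, (n : ℝ) ^ p * a n * t ^ n) / ∑' n : ℕ, a n * t ^ n

/-- The filter of `t ↑ R`: `atTop` when `R = ∞`, and `𝓝[<] R` when `R < ∞`. -/
def nhdsUpto (R : ℝ≥0∞) : Filter ℝ :=
  if R = ⊤ then atTop else nhdsWithin R.toReal (Set.Iio R.toReal)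

/-!
If the mean `m_f(t)` sits at the midpoint `(m + n) / 2` of a gap `(m, n)` of the support of
the coefficients, then the Khinchin variable `X_t` puts no mass within distance `(n - m) / 2`
of its mean, so `σ_f²(t) ≥ (n - m)² / 4`. Such a `t > 0` exists by the intermediate value
theorem: `m_f` is continuous, `m_f(0) = 0`, and `m_f(t)` eventually exceeds every `c < n` when
`a_n > 0`, because the terms of index `≥ n` dominate. For the `limsup`, `m_f` is bounded on each
`[0, T]`, so the midpoints of gaps far out are reached only at `t > T`.
-/

namespace Khinchin

variable {a : ℕ → ℝ}

theorem summable_natCast_pow_mul_mul_pow (hpos : ∀ n, 0 ≤ a n)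
    (hconv : ∀ t : ℝ, Summable fun n : ℕ => a n * t ^ n) (k : ℕ) {t : ℝ} (ht : 0 ≤ t) :
    Summable fun n : ℕ => (n : ℝ) ^ k * a n * t ^ n := by
  refine (hconv (2 ^ k * t)).of_nonneg_of_le (fun n => by have := hpos n; positivity)
    fun n => ?_
  have hn : (n : ℝ) ^ k ≤ (2 ^ k) ^ n := by
    rw [← pow_mul, mul_comm, pow_mul]
    exact pow_le_pow_left₀ n.cast_nonneg (mod_cast n.lt_two_pow_self.le) k
  calc (n : ℝ) ^ k * a n * t ^ n = (n : ℝ) ^ k * (a n * t ^ n) := by ring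
    _ ≤ (2 ^ k) ^ n * (a n * t ^ n) := by gcongr; exact mul_nonneg (hpos n) (pow_nonneg ht n)
    _ = a n * (2 ^ k * t) ^ n := by ring

theorem summable_natCast_mul_mul_pow (hpos : ∀ n, 0 ≤ a n)
    (hconv : ∀ t : ℝ, Summable fun n : ℕ => a n * t ^ n) {t : ℝ} (ht : 0 ≤ t) :
    Summable fun n : ℕ => (n : ℝ) * a n * t ^ n := by
  simpa using summable_natCast_pow_mul_mul_pow hpos hconv 1 ht

theorem tsum_mul_pow_pos (hpos : ∀ n, 0 ≤ a n)
    (hconv : ∀ t : ℝ, Summable fun n : ℕ => a n * t ^ n) {k : ℕ} (hk : a k ≠ 0) {t : ℝ}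
    (ht : 0 < t) : 0 < ∑' n : ℕ, a n * t ^ n :=
  (hconv t).tsum_pos (fun n => mul_nonneg (hpos n) (pow_nonneg ht.le n)) k
    (mul_pos ((hpos k).lt_of_ne' hk) (pow_pos ht k))

theorem continuousOn_tsum_mul_pow {g : ℕ → ℝ} (hg : ∀ n, 0 ≤ g n) {T : ℝ}
    (hT : Summable fun n : ℕ => g n * T ^ n) :
    ContinuousOn (fun t : ℝ => ∑' n : ℕ, g n * t ^ n) (Set.Icc 0 T) := by
  refine continuousOn_tsum (fun n => (continuous_const.mul (continuous_pow n)).continuousOn) hT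
    fun n t ht => ?_
  rw [norm_mul, norm_pow, Real.norm_of_nonneg (hg n), Real.norm_of_nonneg ht.1]
  exact mul_le_mul_of_nonneg_left (pow_le_pow_left₀ ht.1 ht.2 n) (hg n)

theorem continuousOn_meanK (hpos : ∀ n, 0 ≤ a n) (ha0 : 0 < a 0)
    (hconv : ∀ t : ℝ, Summable fun n : ℕ => a n * t ^ n) {T : ℝ} (hT : 0 ≤ T) :
    ContinuousOn (meanK a) (Set.Icc 0 T) := by
  refine ContinuousOn.div ?_ (continuousOn_tsum_mul_pow hpos (hconv T)) fun t ht => ?_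
  · simpa using continuousOn_tsum_mul_pow (fun n => mul_nonneg n.cast_nonneg (hpos n))
      (summable_natCast_mul_mul_pow hpos hconv hT)
  · exact ((hconv t).le_tsum 0 (fun n _ => mul_nonneg (hpos n) (pow_nonneg ht.1 n))).trans_lt'
      (by simpa using ha0) |>.ne'

theorem meanK_zero : meanK a 0 = 0 := by
  rw [meanK, div_eq_zero_iff]
  left
  refine (tsum_congr fun n => ?_).trans tsum_zero
  cases n <;> simp

theorem eventually_lt_meanK (hpos : ∀ n, 0 ≤ a n)
    (hconv : ∀ t : ℝ, Summable fun n : ℕ => a n * t ^ n) {n : ℕ} (hn : a n ≠ 0) {c : ℝ}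
    (hc : c < n) : ∀ᶠ t in atTop, c < meanK a t := by
  set L : ℝ → ℝ := fun t => ∑ k ∈ Finset.range n, ((k : ℝ) - c) * a k * (t ^ k / t ^ n)
    + (n - c) * a n
  have hL : Tendsto L atTop (𝓝 ((n - c) * a n)) := by
    have := tendsto_finsetSum (Finset.range n) fun k hk =>
      (tendsto_pow_div_pow_atTop_zero (Finset.mem_range.mp hk)).const_mul (((k : ℝ) - c) * a k)
    simpa using this.add_const ((n - c) * a n)
  have hlead : 0 < (n - c) * a n := mul_pos (sub_pos.mpr hc) ((hpos n).lt_of_ne' hn)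
  filter_upwards [hL.eventually (eventually_gt_nhds hlead), eventually_gt_atTop 0]
    with t hLt ht
  have hS := hconv t
  have hS1 := summable_natCast_mul_mul_pow hpos hconv ht.le
  have hsum : Summable fun k : ℕ => ((k : ℝ) - c) * (a k * t ^ k) := by
    simpa only [sub_mul, mul_assoc] using hS1.sub (hS.mul_left c)
  -- beyond the index `n` every term of `∑ (k - c) aₖ tᵏ` is nonnegative
  have htail : t ^ n * L t ≤ ∑' k : ℕ, ((k : ℝ) - c) * (a k * t ^ k) := by
    calc t ^ n * L t = ∑ k ∈ Finset.range (n + 1), ((k : ℝ) - c) * (a k * t ^ k) := by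
          have : t ^ n ≠ 0 := (pow_pos ht n).ne'
          simp only [L, Finset.sum_range_succ, mul_add, Finset.mul_sum]
          congr 1
          · refine Finset.sum_congr rfl fun k _ => ?_
            field_simp
          · ring
      _ ≤ _ := hsum.sum_le_tsum _ fun k hk => by
          have : (n : ℝ) + 1 ≤ k := by
            exact_mod_cast Nat.succ_le_of_lt (by simpa using hk)
          exact mul_nonneg (by linarith) (mul_nonneg (hpos k) (pow_nonneg ht.le k))
  rw [meanK, lt_div_iff₀ (tsum_mul_pow_pos hpos hconv hn ht)]
  have hsplit : ∑' k : ℕ, ((k : ℝ) - c) * (a k * t ^ k)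
      = ∑' k : ℕ, (k : ℝ) * a k * t ^ k - c * ∑' k : ℕ, a k * t ^ k := by
    rw [← tsum_mul_left, ← hS1.tsum_sub (hS.mul_left c)]
    exact tsum_congr fun k => by ring
  nlinarith [mul_pos (pow_pos ht n) hLt]

theorem exists_meanK_eq (hpos : ∀ n, 0 ≤ a n) (ha0 : 0 < a 0)
    (hconv : ∀ t : ℝ, Summable fun n : ℕ => a n * t ^ n) {n : ℕ} (hn : a n ≠ 0) {c : ℝ}
    (hc0 : 0 < c) (hcn : c < n) : ∃ t, 0 < t ∧ meanK a t = c := by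
  obtain ⟨T, hcT, hT⟩ := ((eventually_lt_meanK hpos hconv hn hcn).and
    (eventually_ge_atTop 0)).exists
  obtain ⟨t, ht, htc⟩ := intermediate_value_Icc hT (continuousOn_meanK hpos ha0 hconv hT)
    ⟨by rw [meanK_zero]; exact hc0.le, hcT.le⟩
  refine ⟨t, ht.1.lt_of_ne ?_, htc⟩
  rintro rfl
  exact hc0.ne' (htc.symm.trans meanK_zero)

theorem varK_eq_tsum_sq_div (hpos : ∀ n, 0 ≤ a n)
    (hconv : ∀ t : ℝ, Summable fun n : ℕ => a n * t ^ n) {t : ℝ} (ht : 0 ≤ t)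
    (hS : ∑' n : ℕ, a n * t ^ n ≠ 0) :
    varK a t = (∑' n : ℕ, ((n : ℝ) - meanK a t) ^ 2 * (a n * t ^ n)) / ∑' n : ℕ, a n * t ^ n := by
  set μ := meanK a t with hμ
  have hS0 := hconv t
  have hS1 := summable_natCast_mul_mul_pow hpos hconv ht
  have hS2 := summable_natCast_pow_mul_mul_pow hpos hconv 2 ht
  have hexpand : ∑' n : ℕ, ((n : ℝ) - μ) ^ 2 * (a n * t ^ n) = ∑' n : ℕ, (n : ℝ) ^ 2 * a n * t ^ n
      - 2 * μ * ∑' n : ℕ, (n : ℝ) * a n * t ^ n + μ ^ 2 * ∑' n : ℕ, a n * t ^ n := by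
    rw [← tsum_mul_left, ← tsum_mul_left, ← hS2.tsum_sub (hS1.mul_left _),
      ← (hS2.sub (hS1.mul_left _)).tsum_add (hS0.mul_left _)]
    exact tsum_congr fun n => by ring
  rw [hexpand, varK, ← hμ, hμ, meanK]
  field_simp
  ring

theorem sq_le_varK (hpos : ∀ n, 0 ≤ a n)
    (hconv : ∀ t : ℝ, Summable fun n : ℕ => a n * t ^ n) {t : ℝ} (ht : 0 ≤ t)
    (hS : 0 < ∑' n : ℕ, a n * t ^ n) {d : ℝ}
    (hd : ∀ n, a n ≠ 0 → d ^ 2 ≤ ((n : ℝ) - meanK a t) ^ 2) : d ^ 2 ≤ varK a t := by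
  rw [varK_eq_tsum_sq_div hpos hconv ht hS.ne', le_div_iff₀ hS, ← tsum_mul_left]
  refine (hconv t).mul_left _ |>.tsum_le_tsum (fun n => ?_) ?_
  · rcases eq_or_ne (a n) 0 with han | han
    · simp [han]
    · exact mul_le_mul_of_nonneg_right (hd n han) (mul_nonneg (hpos n) (pow_nonneg ht n))
  · have := ((summable_natCast_pow_mul_mul_pow hpos hconv 2 ht).sub
      ((summable_natCast_mul_mul_pow hpos hconv ht).mul_left (2 * meanK a t))).add
      ((hconv t).mul_left (meanK a t ^ 2))
    exact this.congr fun n => by ring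

theorem exists_sq_le_varK_of_gap (hpos : ∀ n, 0 ≤ a n) (ha0 : 0 < a 0)
    (hconv : ∀ t : ℝ, Summable fun n : ℕ => a n * t ^ n) {m n : ℕ} (hmn : m < n)
    (hn : a n ≠ 0) (hgap : ∀ j, m < j → j < n → a j = 0) :
    ∃ t, 0 < t ∧ meanK a t = ((m : ℝ) + n) / 2 ∧ (((n : ℝ) - m) / 2) ^ 2 ≤ varK a t := by
  have hmn' : (m : ℝ) < n := mod_cast hmn
  obtain ⟨t, ht, hmean⟩ := exists_meanK_eq hpos ha0 hconv hn (c := ((m : ℝ) + n) / 2)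
    (by linarith [m.cast_nonneg (α := ℝ)]) (by linarith)
  refine ⟨t, ht, hmean, sq_le_varK hpos hconv ht.le (tsum_mul_pow_pos hpos hconv hn ht)
    fun k hk => ?_⟩
  rw [hmean]
  rcases le_or_gt k m with hkm | hmk
  · have : (k : ℝ) ≤ m := mod_cast hkm
    nlinarith
  · have : (n : ℝ) ≤ k := mod_cast not_lt.mp fun hkn => hk (hgap k hmk hkn)
    nlinarith

theorem le_iSup_varK_of_gap (hpos : ∀ n, 0 ≤ a n) (ha0 : 0 < a 0)
    (hconv : ∀ t : ℝ, Summable fun n : ℕ => a n * t ^ n) {m n : ℕ} (hmn : m < n)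
    (hn : a n ≠ 0) (hgap : ∀ j, m < j → j < n → a j = 0) :
    ((((n : ℝ) - m) ^ 2 / 4 : ℝ) : EReal) ≤ ⨆ t : Set.Ioi (0 : ℝ), (varK a t.1 : EReal) := by
  obtain ⟨t, ht, -, hvar⟩ := exists_sq_le_varK_of_gap hpos ha0 hconv hmn hn hgap
  refine le_iSup_of_le (⟨t, ht⟩ : Set.Ioi (0 : ℝ)) (EReal.coe_le_coe_iff.mpr ?_)
  linarith

theorem exists_gap_above {m : ℕ} (h : ∃ k, m < k ∧ a k ≠ 0) :
    ∃ n, m < n ∧ a n ≠ 0 ∧ ∀ j, m < j → j < n → a j = 0 := by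
  obtain ⟨hmn, hn⟩ := Nat.find_spec h
  exact ⟨Nat.find h, hmn, hn, fun j hmj hjn => not_not.mp fun hj => Nat.find_min h hjn ⟨hmj, hj⟩⟩

theorem le_limsup_varK_of_frequently_gap (hpos : ∀ n, 0 ≤ a n) (ha0 : 0 < a 0)
    (hconv : ∀ t : ℝ, Summable fun n : ℕ => a n * t ^ n) {G : ℕ}
    (hgaps : ∀ N : ℕ, ∃ m n : ℕ, N ≤ m ∧ m < n ∧ a n ≠ 0 ∧
      (∀ j, m < j → j < n → a j = 0) ∧ G ≤ n - m) :
    (((G : ℝ) ^ 2 / 4 : ℝ) : EReal) ≤ limsup (fun t : ℝ => (varK a t : EReal)) atTop := by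
  refine le_limsup_of_frequently_le' (frequently_atTop.mpr fun T => ?_)
  obtain ⟨B, hB⟩ := (isCompact_Icc.bddAbove_image
    (continuousOn_meanK hpos ha0 hconv (le_max_right T 0)) : BddAbove _)
  obtain ⟨m, n, hBm, hmn, hn, hgap, hG⟩ := hgaps ⌈B⌉₊
  obtain ⟨t, ht, hmean, hvar⟩ := exists_sq_le_varK_of_gap hpos ha0 hconv hmn hn hgap
  have hmn' : (m : ℝ) < n := mod_cast hmn
  -- `meanK a t = (m + n) / 2 > B`, while `meanK a ≤ B` on `[0, max T 0]`
  have hTt : T < t := by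
    by_contra! htT
    have := hB ⟨t, ⟨ht.le, htT.trans (le_max_left T 0)⟩, hmean⟩
    linarith [Nat.le_ceil B, (Nat.cast_le (α := ℝ)).mpr hBm]
  refine ⟨t, hTt.le, EReal.coe_le_coe_iff.mpr ?_⟩
  have hG' : (G : ℝ) ≤ n - m := by
    rw [le_sub_iff_add_le]
    exact_mod_cast Nat.add_le_of_le_sub hmn.le hG
  nlinarith [G.cast_nonneg (α := ℝ)]

end Khinchin

open Khinchin

/-- Boïchuk–Gol'dberg, Theorem 1.2.3. For `f ∈ K` entire,
`sup_{t>0} σ_f²(t) ≥ gap(f)²/4 (≥ 1/4)`, and if `f` is transcendental,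
`limsup_{t→∞} σ_f²(t) ≥ gap̄(f)²/4 (≥ 1/4)`.  Here `gap(f)` is the supremum of differences
of consecutive nonzero-coefficient indices, and `gap̄(f)` its limsup; the statements are
expressed through realized consecutive gaps, with values taken in `EReal`. -/
theorem statement1 (a : ℕ → ℝ)
    (hpos : ∀ n, 0 ≤ a n) (ha0 : 0 < a 0) (ha1 : ∃ n, 1 ≤ n ∧ 0 < a n)
    (hconv : ∀ t : ℝ, Summable fun n : ℕ => a n * t ^ n) :
    ((∀ m n : ℕ, m < n → a m ≠ 0 → a n ≠ 0 → (∀ j, m < j → j < n → a j = 0) →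
        ((((n : ℝ) - (m : ℝ)) ^ 2 / 4 : ℝ) : EReal) ≤
          ⨆ t : Set.Ioi (0 : ℝ), (varK a t.1 : EReal)) ∧
      (((1 / 4 : ℝ) : EReal) ≤ ⨆ t : Set.Ioi (0 : ℝ), (varK a t.1 : EReal))) ∧
    ((¬ ∃ N : ℕ, ∀ n, N < n → a n = 0) →
      (∀ G : ℕ,
        (∀ N : ℕ, ∃ m n : ℕ, N ≤ m ∧ m < n ∧ a m ≠ 0 ∧ a n ≠ 0 ∧
            (∀ j, m < j → j < n → a j = 0) ∧ G ≤ n - m) →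
        (((G : ℝ) ^ 2 / 4 : ℝ) : EReal) ≤
          Filter.limsup (fun t : ℝ => (varK a t : EReal)) atTop) ∧
      (((1 / 4 : ℝ) : EReal) ≤ Filter.limsup (fun t : ℝ => (varK a t : EReal)) atTop)) := by
  refine ⟨⟨fun m n hmn _ => le_iSup_varK_of_gap hpos ha0 hconv hmn, ?_⟩,
    fun hinf => ⟨fun G hG => ?_, ?_⟩⟩
  · obtain ⟨k, hk1, hk⟩ := ha1
    obtain ⟨n, hn1, hn, hgap⟩ := exists_gap_above ⟨k, hk1, hk.ne'⟩
    refine le_trans (EReal.coe_le_coe_iff.mpr ?_)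
      (le_iSup_varK_of_gap hpos ha0 hconv hn1 hn hgap)
    have : (1 : ℝ) ≤ n := mod_cast hn1
    nlinarith
  · refine le_limsup_varK_of_frequently_gap hpos ha0 hconv fun N => ?_
    obtain ⟨m, n, hNm, hmn, -, hn, hgap, hGnm⟩ := hG N
    exact ⟨m, n, hNm, hmn, hn, hgap, hGnm⟩
  · push Not at hinf
    simpa using le_limsup_varK_of_frequently_gap hpos ha0 hconv (G := 1) fun N => by
      obtain ⟨n, hmn, hn, hgap⟩ := exists_gap_above (hinf N)
      exact ⟨N, n, le_rfl, hmn, hn, hgap, by omega⟩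
end
end

section
/- Let f(z) = ∑_{n≥0} a_n z^n be an entire power series in the class K. Then sup_{t>0} σ_f²(t) = 1/4 if and only if f(z) = a + b z for some real numbers a, b > 0. -/
open Filter Topology MeasureTheory
open scoped ENNReal NNReal Classical

noncomputable section

/-!
Since `n² ≥ n` on `ℕ`, `σ²(t) ≥ m(t) - m(t)²`, with equality exactly when `aₙ = 0` for `n ≥ 2`.
If some `a_N > 0` with `N ≥ 2` the inequality is strict for `t > 0`, and the mean `m(t)`, which is
continuous with `m(0) = 0` and exceeds `1/2` for large `t`, takes the value `1/2` at some `t > 0`;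
there `σ²(t) > 1/4`. For `f = a + bz` instead `σ² = m(1 - m) ≤ 1/4`, with equality at `t = a/b`.
-/

section KhinchinFamily

variable {a : ℕ → ℝ}

theorem summable_natCast_pow_mul_mul_pow (hconv : ∀ t : ℝ, Summable fun n : ℕ => a n * t ^ n)
    (k : ℕ) (t : ℝ) : Summable fun n : ℕ => (n : ℝ) ^ k * a n * t ^ n := by
  refine .of_norm_bounded (hconv (2 ^ k * |t|)).norm fun n => ?_
  have hn : (n : ℝ) ^ k ≤ (2 ^ k) ^ n := by
    rw [← pow_mul, mul_comm, pow_mul]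
    gcongr
    exact_mod_cast n.lt_two_pow_self.le
  calc ‖(n : ℝ) ^ k * a n * t ^ n‖ = (n : ℝ) ^ k * (|a n| * |t| ^ n) := by
        simp only [Real.norm_eq_abs, abs_mul, abs_pow, Nat.abs_cast]; ring
    _ ≤ (2 ^ k) ^ n * (|a n| * |t| ^ n) := by gcongr
    _ = ‖a n * (2 ^ k * |t|) ^ n‖ := by
        simp only [Real.norm_eq_abs, abs_mul, abs_pow, abs_abs, mul_pow, abs_two]; ring

theorem summable_natCast_mul_mul_pow (hconv : ∀ t : ℝ, Summable fun n : ℕ => a n * t ^ n)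
    (t : ℝ) : Summable fun n : ℕ => (n : ℝ) * a n * t ^ n := by
  simpa using summable_natCast_pow_mul_mul_pow hconv 1 t

theorem continuous_tsum_mul_pow (hconv : ∀ t : ℝ, Summable fun n : ℕ => a n * t ^ n) :
    Continuous fun t : ℝ => ∑' n : ℕ, a n * t ^ n := by
  refine continuous_iff_continuousAt.2 fun x => ?_
  set T := |x| + 1
  have hT : ContinuousOn (fun t : ℝ => ∑' n : ℕ, a n * t ^ n) (Set.Icc (-T) T) := by
    refine continuousOn_tsum (fun n => by fun_prop) (hconv T).norm fun n t ht => ?_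
    rw [norm_mul, norm_mul, norm_pow, norm_pow]
    gcongr
    rw [Real.norm_eq_abs, Real.norm_eq_abs, abs_of_pos (by positivity : 0 < T)]
    exact abs_le.2 ht
  exact hT.continuousAt (Icc_mem_nhds (by linarith [neg_abs_le x]) (by linarith [le_abs_self x]))

theorem meanK_zero : meanK a 0 = 0 := by
  have h (n : ℕ) : (n : ℝ) * a n * 0 ^ n = 0 := by cases n <;> simp
  simp [meanK, h]

variable (hpos : ∀ n, 0 ≤ a n) (hconv : ∀ t : ℝ, Summable fun n : ℕ => a n * t ^ n)
include hpos hconv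

theorem coeff_zero_le_tsum_mul_pow {t : ℝ} (ht : 0 ≤ t) : a 0 ≤ ∑' n : ℕ, a n * t ^ n := by
  simpa using (hconv t).le_tsum 0 fun n _ => mul_nonneg (hpos n) (pow_nonneg ht n)


theorem tsum_mul_pow_pos (ha0 : 0 < a 0) {t : ℝ} (ht : 0 ≤ t) : 0 < ∑' n : ℕ, a n * t ^ n :=
  ha0.trans_le (coeff_zero_le_tsum_mul_pow hpos hconv ht)

theorem continuousOn_meanK (ha0 : 0 < a 0) : ContinuousOn (meanK a) (Set.Ici 0) :=
  (continuous_tsum_mul_pow (summable_natCast_mul_mul_pow hconv)).continuousOn.div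
    (continuous_tsum_mul_pow hconv).continuousOn fun _ ht => (tsum_mul_pow_pos hpos hconv ha0 ht).ne'

theorem tsum_mul_pow_le_add_tsum_natCast_mul {t : ℝ} (ht : 0 ≤ t) :
    ∑' n : ℕ, a n * t ^ n ≤ a 0 + ∑' n : ℕ, (n : ℝ) * a n * t ^ n := by
  have hE1 := summable_natCast_mul_mul_pow hconv t
  rw [(hconv t).tsum_eq_zero_add, hE1.tsum_eq_zero_add, Nat.cast_zero, zero_mul, zero_mul,
    zero_add, pow_zero, mul_one]
  refine add_le_add_right (Summable.tsum_le_tsum (fun n => ?_) ((summable_nat_add_iff 1).2 (hconv t))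
    ((summable_nat_add_iff 1).2 hE1)) _
  rw [mul_assoc]
  exact le_mul_of_one_le_left (mul_nonneg (hpos _) (pow_nonneg ht _)) (by simp)

theorem exists_half_lt_meanK (ha0 : 0 < a 0) {N : ℕ} (hN : 1 ≤ N) (haN : 0 < a N) :
    ∃ t, 0 ≤ t ∧ 1 / 2 < meanK a t := by
  set t := 1 + a 0 / a N
  have ht : 1 ≤ t := le_add_of_nonneg_right (by positivity)
  have hE1 : a 0 < ∑' n : ℕ, (n : ℝ) * a n * t ^ n :=
    calc a 0 < a N * t := by rw [mul_add, mul_div_cancel₀ _ haN.ne']; linarith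
      _ ≤ a N * t ^ N := by gcongr; exact le_self_pow₀ ht (by omega)
      _ ≤ (N : ℝ) * a N * t ^ N := by
          rw [mul_assoc]; exact le_mul_of_one_le_left (by positivity) (by exact_mod_cast hN)
      _ ≤ ∑' n : ℕ, (n : ℝ) * a n * t ^ n :=
          (summable_natCast_mul_mul_pow hconv t).le_tsum N fun n _ => by
            have := hpos n; positivity
  refine ⟨t, by positivity, ?_⟩
  rw [meanK, lt_div_iff₀ (tsum_mul_pow_pos hpos hconv ha0 (by positivity))]
  linarith [tsum_mul_pow_le_add_tsum_natCast_mul hpos hconv (t := t) (by positivity)]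

theorem exists_meanK_eq_half (ha0 : 0 < a 0) {N : ℕ} (hN : 1 ≤ N) (haN : 0 < a N) :
    ∃ t, 0 < t ∧ meanK a t = 1 / 2 := by
  obtain ⟨T, hT0, hT⟩ := exists_half_lt_meanK hpos hconv ha0 hN haN
  obtain ⟨t, ht, hmt⟩ := intermediate_value_Icc hT0
    ((continuousOn_meanK hpos hconv ha0).mono Set.Icc_subset_Ici_self)
    ⟨by rw [meanK_zero]; norm_num, hT.le⟩
  refine ⟨t, ht.1.lt_of_ne ?_, hmt⟩
  rintro rfl
  norm_num [meanK_zero] at hmt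

theorem meanK_sub_sq_lt_varK (ha0 : 0 < a 0) {N : ℕ} (hN : 2 ≤ N) (haN : 0 < a N) {t : ℝ}
    (ht : 0 < t) : meanK a t - meanK a t ^ 2 < varK a t := by
  have hE : ∑' n : ℕ, (n : ℝ) * a n * t ^ n < ∑' n : ℕ, (n : ℝ) ^ 2 * a n * t ^ n := by
    refine Summable.tsum_lt_tsum_of_nonneg (i := N) (fun n => by have := hpos n; positivity)
      (fun n => ?_) ?_ (summable_natCast_pow_mul_mul_pow hconv 2 t)
    · have := hpos n
      gcongr
      exact_mod_cast Nat.le_self_pow two_ne_zero n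
    · have hN' : (2 : ℝ) ≤ N := by exact_mod_cast hN
      gcongr
      nlinarith
  exact sub_lt_sub_right (div_lt_div_of_pos_right hE (tsum_mul_pow_pos hpos hconv ha0 ht.le)) _

end KhinchinFamily

section Linear

variable {a : ℕ → ℝ} (hzero : ∀ n, 2 ≤ n → a n = 0)
include hzero

theorem varK_eq_meanK_sub_sq (t : ℝ) : varK a t = meanK a t - meanK a t ^ 2 := by
  have h (n : ℕ) : (n : ℝ) ^ 2 * a n * t ^ n = n * a n * t ^ n := by
    rcases lt_or_ge n 2 with hn | hn
    · interval_cases n <;> simp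
    · simp [hzero n hn]
  simp only [varK, h]
  rfl

theorem meanK_eq_of_forall_two_le (t : ℝ) : meanK a t = a 1 * t / (a 0 + a 1 * t) := by
  have hsum (c : ℕ → ℝ) (hc : ∀ n, 2 ≤ n → c n = 0) : ∑' n, c n = c 0 + c 1 := by
    rw [tsum_eq_sum (s := Finset.range 2) fun n hn => hc n (by simp at hn; omega)]
    simp [Finset.sum_range_succ]
  rw [meanK, hsum _ fun n hn => by simp [hzero n hn], hsum _ fun n hn => by simp [hzero n hn]]
  simp

end Linear

/-- Abi-Khuzam, Theorem 1.2.4. For `f ∈ K` entire,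
`sup_{t>0} σ_f²(t) = 1/4` if and only if `f(z) = a + bz` with `a, b > 0`
(given `a₀ > 0`, this means `a₁ > 0` and `aₙ = 0` for `n ≥ 2`). -/
theorem statement2 (a : ℕ → ℝ)
    (hpos : ∀ n, 0 ≤ a n) (ha0 : 0 < a 0) (ha1 : ∃ n, 1 ≤ n ∧ 0 < a n)
    (hconv : ∀ t : ℝ, Summable fun n : ℕ => a n * t ^ n) :
    (⨆ t : Set.Ioi (0 : ℝ), (varK a t.1 : EReal)) = ((1 / 4 : ℝ) : EReal) ↔
      (0 < a 1 ∧ ∀ n, 2 ≤ n → a n = 0) := by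
  constructor
  · intro hsup
    have hle (t : ℝ) (ht : 0 < t) : varK a t ≤ 1 / 4 :=
      EReal.coe_le_coe_iff.1 (hsup ▸ le_iSup (fun s : Set.Ioi (0 : ℝ) => (varK a s.1 : EReal)) ⟨t, ht⟩)
    have hzero : ∀ n, 2 ≤ n → a n = 0 := by
      intro N hN
      by_contra hne
      have haN := (hpos N).lt_of_ne' hne
      obtain ⟨t, ht, hmt⟩ := exists_meanK_eq_half hpos hconv ha0 (by omega : 1 ≤ N) haN
      have := meanK_sub_sq_lt_varK hpos hconv ha0 hN haN ht
      rw [hmt] at this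
      linarith [hle t ht]
    obtain ⟨n, hn, han⟩ := ha1
    obtain rfl | hn2 : n = 1 ∨ 2 ≤ n := by omega
    · exact ⟨han, hzero⟩
    · exact absurd (hzero n hn2) han.ne'
  · rintro ⟨ha1pos, hzero⟩
    have hle (t : ℝ) : varK a t ≤ 1 / 4 := by
      rw [varK_eq_meanK_sub_sq hzero]
      nlinarith [sq_nonneg (meanK a t - 1 / 2)]
    have hmid : varK a (a 0 / a 1) = 1 / 4 := by
      rw [varK_eq_meanK_sub_sq hzero, meanK_eq_of_forall_two_le hzero, mul_div_cancel₀ _ ha1pos.ne']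
      field_simp
      ring
    refine le_antisymm (iSup_le fun t => EReal.coe_le_coe_iff.2 (hle t)) ?_
    exact le_iSup_of_le (⟨a 0 / a 1, div_pos ha0 ha1pos⟩ : Set.Ioi (0 : ℝ)) (by rw [hmid])
end
end

section
/- (Sakovič) Let Y be a real random variable on a probability space with E(Y²) < ∞, and let θ ∈ ℝ. If E(e^{iθY}) = 0, then θ² · Var(Y) ≥ π²/4. -/
/-! Multiplying the hypothesis by the phase `e^{-iθ E Y}` and taking real parts gives `E cos Z = 0`
for the centred variable `Z = θ (Y - E Y)`, whose second moment is `θ² Var Y`. If `E Z² < π²/4`, pick `s < π/2` with `E Z² < s²`. The even parabola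
`q z = cos s + (sin s / 2s) (s² - z²)`, tangent to `cos` at `±s`, lies below `cos` because
`sin x / x` decreases on `(0, π]`; hence
`0 = E cos Z ≥ E q(Z) = cos s + (sin s / 2s) (s² - E Z²) > 0`. -/

open MeasureTheory ProbabilityTheory Real

namespace Real

theorem sin_div_self_antitoneOn : AntitoneOn (fun x => sin x / x) (Set.Ioc 0 π) := by
  intro x hx y hy hxy
  have := strictConcaveOn_sin_Icc.concaveOn.neg.secant_mono (a := 0) ⟨le_rfl, pi_pos.le⟩
    (Set.Ioc_subset_Icc_self hx) (Set.Ioc_subset_Icc_self hy) hx.1.ne' hy.1.ne' hxy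
  simpa [neg_div] using this

theorem sin_le_sin_div_mul {s x : ℝ} (hs : 0 < s) (hsπ : s ≤ π / 2) (hsx : s ≤ x) :
    sin x ≤ sin s / s * x := by
  have hx : 0 < x := hs.trans_le hsx
  rcases le_or_gt x π with hxπ | hπx
  · have := sin_div_self_antitoneOn ⟨hs, by linarith⟩ ⟨hx, hxπ⟩ hsx
    rwa [div_le_iff₀ hx] at this
  · calc sin x ≤ 1 := sin_le_one x
      _ ≤ 2 / π * s / s * x := by
        rw [mul_div_assoc, div_self hs.ne', mul_one, div_mul_eq_mul_div, le_div_iff₀ pi_pos]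
        linarith
      _ ≤ sin s / s * x := by gcongr; exact mul_le_sin hs.le hsπ

theorem cos_add_mul_sq_sub_sq_le_cos {s : ℝ} (hs : 0 < s) (hsπ : s ≤ π / 2) (z : ℝ) :
    cos s + sin s / (2 * s) * (s ^ 2 - z ^ 2) ≤ cos z := by
  set c := sin s / (2 * s)
  set g : ℝ → ℝ := fun x => cos x + c * x ^ 2
  have hg : ∀ x, HasDerivAt g (c * (2 * x) - sin x) x := fun x =>
    ((hasDerivAt_cos x).add ((hasDerivAt_pow 2 x).const_mul c)).congr_deriv (by norm_num; ring)
  have hc : ∀ x, c * (2 * x) = sin s / s * x := fun x => by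
    simp only [c]; field_simp
  have hgc : Continuous g := by fun_prop
  have hdiff : ∀ {t : Set ℝ}, DifferentiableOn ℝ g t := fun {_} x _ =>
    (hg x).differentiableAt.differentiableWithinAt
  have hanti : AntitoneOn g (Set.Icc 0 s) := by
    refine antitoneOn_of_deriv_nonpos (convex_Icc 0 s) hgc.continuousOn hdiff ?_
    intro x hx
    rw [interior_Icc] at hx
    have := sin_div_self_antitoneOn ⟨hx.1, hx.2.le.trans (by linarith)⟩
      ⟨hs, by linarith⟩ hx.2.le
    rw [le_div_iff₀ hx.1] at this
    rwa [(hg x).deriv, hc, sub_nonpos]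
  have hmono : MonotoneOn g (Set.Ici s) := by
    refine monotoneOn_of_deriv_nonneg (convex_Ici s) hgc.continuousOn hdiff ?_
    intro x hx
    rw [interior_Ici] at hx
    rw [(hg x).deriv, hc, sub_nonneg]
    exact sin_le_sin_div_mul hs hsπ (le_of_lt hx)
  have hmin : g s ≤ g |z| := by
    rcases le_total |z| s with hz | hz
    · exact hanti ⟨abs_nonneg z, hz⟩ ⟨hs.le, le_rfl⟩ hz
    · exact hmono Set.self_mem_Ici hz hz
  simp only [g, cos_abs, sq_abs] at hmin
  linarith

end Real

section

variable {Ω : Type*} [MeasurableSpace Ω] {μ : Measure Ω}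

theorem integral_cos_sub_eq_zero [IsFiniteMeasure μ] {X : Ω → ℝ}
    (hX : AEStronglyMeasurable X μ)
    (h : ∫ ω, Complex.exp (Complex.I * (X ω : ℂ)) ∂μ = 0) (c : ℝ) :
    ∫ ω, cos (X ω - c) ∂μ = 0 := by
  have hint : Integrable (fun ω => Complex.exp (Complex.I * ((X ω - c : ℝ) : ℂ))) μ := by
    refine Integrable.of_bound (by fun_prop) 1 (ae_of_all _ fun ω => ?_)
    rw [mul_comm, Complex.norm_exp_ofReal_mul_I]
  have hshift : ∫ ω, Complex.exp (Complex.I * ((X ω - c : ℝ) : ℂ)) ∂μ = 0 := by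
    have hsplit : ∀ ω, Complex.exp (Complex.I * ((X ω - c : ℝ) : ℂ)) =
        Complex.exp (-(Complex.I * c)) * Complex.exp (Complex.I * (X ω : ℂ)) := fun ω => by
      rw [← Complex.exp_add]; congr 1; push_cast; ring
    simp_rw [hsplit, integral_const_mul, h, mul_zero]
  have hre := integral_re hint
  rw [hshift, map_zero] at hre
  simpa only [RCLike.re_to_complex, mul_comm Complex.I, Complex.exp_ofReal_mul_I_re] using hre

theorem cos_add_mul_sub_integral_sq_le_integral_cos [IsProbabilityMeasure μ] {Z : Ω → ℝ}
    (hZ : MemLp Z 2 μ) {s : ℝ} (hs : 0 < s) (hsπ : s ≤ π / 2) :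
    cos s + sin s / (2 * s) * (s ^ 2 - ∫ ω, Z ω ^ 2 ∂μ) ≤ ∫ ω, cos (Z ω) ∂μ := by
  have hsq := hZ.integrable_sq
  have hquad : Integrable (fun ω => sin s / (2 * s) * (s ^ 2 - Z ω ^ 2)) μ :=
    ((integrable_const _).sub hsq).const_mul _
  have hcos : Integrable (fun ω => cos (Z ω)) μ :=
    Integrable.of_bound (continuous_cos.comp_aestronglyMeasurable hZ.aestronglyMeasurable) 1
      (ae_of_all _ fun ω => by simpa using abs_cos_le_one _)
  calc cos s + sin s / (2 * s) * (s ^ 2 - ∫ ω, Z ω ^ 2 ∂μ)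
      = ∫ ω, (cos s + sin s / (2 * s) * (s ^ 2 - Z ω ^ 2)) ∂μ := by
        rw [integral_add (integrable_const _) hquad,
          integral_const_mul, integral_sub (integrable_const _) hsq]
        simp
    _ ≤ ∫ ω, cos (Z ω) ∂μ :=
        integral_mono ((integrable_const _).add hquad) hcos
          fun ω => cos_add_mul_sq_sub_sq_le_cos hs hsπ (Z ω)

theorem pi_sq_div_four_le_integral_sq [IsProbabilityMeasure μ] {Z : Ω → ℝ} (hZ : MemLp Z 2 μ)
    (hcos : ∫ ω, cos (Z ω) ∂μ = 0) : π ^ 2 / 4 ≤ ∫ ω, Z ω ^ 2 ∂μ := by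
  set v := ∫ ω, Z ω ^ 2 ∂μ
  by_contra! hv
  have hsqrt : √v < π / 2 := (sqrt_lt' (by positivity)).2 (by linarith)
  obtain ⟨s, hvs, hsπ⟩ := exists_between hsqrt
  have hs : 0 < s := (sqrt_nonneg v).trans_lt hvs
  have hbound := cos_add_mul_sub_integral_sq_le_integral_cos hZ hs hsπ.le
  have hcos_pos : 0 < cos s := cos_pos_of_mem_Ioo ⟨by linarith, hsπ⟩
  have hslope : 0 ≤ sin s / (2 * s) :=
    div_nonneg (sin_nonneg_of_nonneg_of_le_pi hs.le (by linarith)) (by positivity)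
  have hvs2 : v < s ^ 2 := (sqrt_lt' hs).1 hvs
  rw [hcos] at hbound
  nlinarith [mul_nonneg hslope (sub_nonneg.2 hvs2.le)]

end

/-- Sakovič, Lemma 1.3.6. If `Y` is a real random variable on a probability
space with `E(Y²) < ∞` and `E(e^{iθY}) = 0` for some `θ ∈ ℝ`, then `θ² Var(Y) ≥ π²/4`. -/
theorem statement3 {Ω : Type*} [MeasurableSpace Ω] (μ : Measure Ω) [IsProbabilityMeasure μ]
    (Y : Ω → ℝ) (hY : MemLp Y 2 μ) (θ : ℝ)
    (h : (∫ ω, Complex.exp (Complex.I * ((θ * Y ω : ℝ) : ℂ)) ∂μ) = 0) :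
    Real.pi ^ 2 / 4 ≤ θ ^ 2 * ProbabilityTheory.variance Y μ := by
  set X := fun ω => θ * Y ω
  have hX : MemLp X 2 μ := hY.const_mul θ
  have hcos := integral_cos_sub_eq_zero hX.aestronglyMeasurable h μ[X]
  rw [← variance_const_mul, variance_eq_integral hX.aemeasurable]
  exact pi_sq_div_four_le_integral_sq (hX.sub (memLp_const _)) hcos
end

section
/- Let f(z) = ∑_{n≥0} a_n z^n be in the class K with radius of convergence R > 0, regarded as a holomorphic function on the complex disk {|z| < R}. If f(t e^{iθ}) = 0 for some t ∈ (0,R) and some θ ∈ [−π, π], then |θ| · σ_f(t) ≥ π/2. Consequently, f does not vanish in the region { t e^{iθ} : 0 ≤ t < R, |θ| < π/(2σ_f(t)) }. -/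
open Filter Topology MeasureTheory
open scoped ENNReal NNReal Classical

noncomputable section

/-- The power series `f` evaluated at a complex argument. -/
def Fc (a : ℕ → ℝ) (z : ℂ) : ℂ := ∑' n : ℕ, (a n : ℂ) * z ^ n

/-!
If `f(t e^{iθ}) = 0`, multiplying by `e^{-imθ}`, where `m` is the mean of the Khinchin family,
and taking real parts gives `∑ aₙ tⁿ cos((n - m)θ) = 0`. The parabola `π/4 - x²/π` lies below
`cos` and touches it at `x = ±π/2`, so
`0 ≥ π/4 · f(t) - θ²/π · ∑ (n - m)² aₙ tⁿ = f(t) (π/4 - θ² σ_f(t)²/π)`, that is `|θ| σ_f(t) ≥ π/2`.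
-/

open Real

lemma sub_sq_div_pi_le_sin {u : ℝ} (hu : u ≤ π / 2) : u - u ^ 2 / π ≤ sin u := by
  rcases le_total u 0 with hu0 | hu0
  · have hsin : u ≤ sin u := by simpa using sin_le (neg_nonneg.mpr hu0)
    have : 0 ≤ u ^ 2 / π := by positivity
    linarith
  · -- `u π ≤ π² / 2 < 6`
    have hcube : u ^ 3 / 6 ≤ u ^ 2 / π := by
      rw [div_le_div_iff₀ (by norm_num) pi_pos]
      nlinarith [pi_lt_d2, pi_pos, sq_nonneg u, mul_nonneg (sq_nonneg u) hu0]
    linarith [sin_ge_sub_cube hu0]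

lemma pi_div_four_sub_sq_div_pi_le_cos (x : ℝ) : π / 4 - x ^ 2 / π ≤ cos x := by
  have h := sub_sq_div_pi_le_sin (u := π / 2 - |x|) (by linarith [abs_nonneg x])
  rw [sin_pi_div_two_sub, cos_abs] at h
  calc π / 4 - x ^ 2 / π = (π / 2 - |x|) - (π / 2 - |x|) ^ 2 / π := by
        rw [sub_sq, sq_abs]
        field_simp
        ring
    _ ≤ cos x := h

lemma summable_pow_mul_mul_pow_of_lt {a : ℕ → ℝ} {s t : ℝ}
    (hs : Summable fun n : ℕ => a n * s ^ n) (ht : 0 ≤ t) (hts : t < s) (k : ℕ) :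
    Summable fun n : ℕ => (n : ℝ) ^ k * (a n * t ^ n) := by
  have hs0 : 0 < s := ht.trans_lt hts
  have hr : ‖t / s‖ < 1 := by
    rw [norm_of_nonneg (by positivity)]
    exact (div_lt_one hs0).mpr hts
  obtain ⟨C, hC⟩ := hs.tendsto_atTop_zero.norm.bddAbove_range
  refine .of_norm_bounded ((summable_pow_mul_geometric_of_norm_lt_one k hr).mul_left C)
    fun n => ?_
  calc ‖(n : ℝ) ^ k * (a n * t ^ n)‖ = ((n : ℝ) ^ k * (t / s) ^ n) * ‖a n * s ^ n‖ := by
        simp only [norm_mul, norm_pow, Real.norm_natCast, div_pow, norm_of_nonneg ht,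
          norm_of_nonneg hs0.le]
        field_simp
    _ ≤ ((n : ℝ) ^ k * (t / s) ^ n) * C :=
        mul_le_mul_of_nonneg_left (hC (Set.mem_range_self n)) (by positivity)
    _ = C * ((n : ℝ) ^ k * (t / s) ^ n) := mul_comm _ _

lemma summable_pow_mul_mul_pow_of_ofReal_lt {a : ℕ → ℝ} {R : ℝ≥0∞}
    (hconv : ∀ t : ℝ, 0 ≤ t → ENNReal.ofReal t < R → Summable fun n : ℕ => a n * t ^ n)
    {t : ℝ} (ht : 0 ≤ t) (htR : ENNReal.ofReal t < R) (k : ℕ) :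
    Summable fun n : ℕ => (n : ℝ) ^ k * (a n * t ^ n) := by
  obtain ⟨s, hs0, hts, hsR⟩ := ENNReal.lt_iff_exists_real_btwn.mp htR
  exact summable_pow_mul_mul_pow_of_lt (hconv s hs0 hsR) ht
    ((ENNReal.ofReal_lt_ofReal_iff_of_nonneg ht).mp hts) k

section Weights

variable {w : ℕ → ℝ}

lemma hasSum_sub_sq_mul (h0 : Summable w) (h1 : Summable fun n : ℕ => (n : ℝ) * w n)
    (h2 : Summable fun n : ℕ => (n : ℝ) ^ 2 * w n) (c : ℝ) :
    HasSum (fun n : ℕ => ((n : ℝ) - c) ^ 2 * w n)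
      (∑' n : ℕ, (n : ℝ) ^ 2 * w n - 2 * c * ∑' n : ℕ, (n : ℝ) * w n + c ^ 2 * ∑' n : ℕ, w n) := by
  refine ((h2.hasSum.sub (h1.hasSum.mul_left (2 * c))).add (h0.hasSum.mul_left (c ^ 2))).congr_fun
    fun n => ?_
  ring

lemma tsum_mul_cos_eq_zero_of_tsum_mul_exp_eq_zero (hw : Summable w) {θ : ℝ}
    (h : ∑' n : ℕ, (w n : ℂ) * Complex.exp (((n * θ : ℝ) : ℂ) * Complex.I) = 0) (c : ℝ) :
    ∑' n : ℕ, w n * cos (((n : ℝ) - c) * θ) = 0 := by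
  have hsum : Summable fun n : ℕ =>
      (w n : ℂ) * Complex.exp (((((n : ℝ) - c) * θ : ℝ) : ℂ) * Complex.I) :=
    .of_norm_bounded hw.abs fun n => by
      rw [norm_mul, Complex.norm_real, Complex.norm_exp_ofReal_mul_I, mul_one, Real.norm_eq_abs]
  have hrot :
      ∑' n : ℕ, (w n : ℂ) * Complex.exp (((((n : ℝ) - c) * θ : ℝ) : ℂ) * Complex.I) = 0 := by
    have hterm : ∀ n : ℕ, (w n : ℂ) * Complex.exp (((((n : ℝ) - c) * θ : ℝ) : ℂ) * Complex.I) =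
        (w n : ℂ) * Complex.exp (((n * θ : ℝ) : ℂ) * Complex.I) *
          Complex.exp (-(((c * θ : ℝ) : ℂ) * Complex.I)) := by
      intro n
      rw [mul_assoc, ← Complex.exp_add]
      push_cast
      ring_nf
    rw [tsum_congr hterm, tsum_mul_right, h, zero_mul]
  simpa only [Complex.re_tsum hsum, Complex.re_ofReal_mul, Complex.exp_ofReal_mul_I_re,
    Complex.zero_re] using congrArg Complex.re hrot

lemma pi_div_four_mul_tsum_sub_le_tsum_mul_cos (hw : ∀ n, 0 ≤ w n) (h0 : Summable w) {c : ℝ}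
    (hq : Summable fun n : ℕ => ((n : ℝ) - c) ^ 2 * w n) (θ : ℝ) :
    π / 4 * ∑' n : ℕ, w n - θ ^ 2 / π * ∑' n : ℕ, ((n : ℝ) - c) ^ 2 * w n ≤
      ∑' n : ℕ, w n * cos (((n : ℝ) - c) * θ) := by
  have hcos : Summable fun n : ℕ => w n * cos (((n : ℝ) - c) * θ) :=
    .of_norm_bounded h0 fun n => by
      rw [norm_mul, norm_of_nonneg (hw n), Real.norm_eq_abs]
      exact mul_le_of_le_one_right (hw n) (abs_cos_le_one _)
  rw [← tsum_mul_left, ← tsum_mul_left, ← (h0.mul_left _).tsum_sub (hq.mul_left _)]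
  refine (h0.mul_left _).sub (hq.mul_left _) |>.tsum_le_tsum (fun n => ?_) hcos
  calc π / 4 * w n - θ ^ 2 / π * (((n : ℝ) - c) ^ 2 * w n)
      = w n * (π / 4 - (((n : ℝ) - c) * θ) ^ 2 / π) := by ring
    _ ≤ w n * cos (((n : ℝ) - c) * θ) :=
        mul_le_mul_of_nonneg_left (pi_div_four_sub_sq_div_pi_le_cos _) (hw n)

theorem pi_sq_div_four_le_sq_mul_variance (hw : ∀ n, 0 ≤ w n) (hS0 : 0 < ∑' n : ℕ, w n)
    (h0 : Summable w) (h1 : Summable fun n : ℕ => (n : ℝ) * w n)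
    (h2 : Summable fun n : ℕ => (n : ℝ) ^ 2 * w n) {θ : ℝ}
    (h : ∑' n : ℕ, (w n : ℂ) * Complex.exp (((n * θ : ℝ) : ℂ) * Complex.I) = 0) :
    π ^ 2 / 4 ≤ θ ^ 2 * ((∑' n : ℕ, (n : ℝ) ^ 2 * w n) / ∑' n : ℕ, w n -
      ((∑' n : ℕ, (n : ℝ) * w n) / ∑' n : ℕ, w n) ^ 2) := by
  have hq := hasSum_sub_sq_mul h0 h1 h2 ((∑' n : ℕ, (n : ℝ) * w n) / ∑' n : ℕ, w n)
  have key := pi_div_four_mul_tsum_sub_le_tsum_mul_cos hw h0 hq.summable θ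
  rw [tsum_mul_cos_eq_zero_of_tsum_mul_exp_eq_zero h0 h, hq.tsum_eq] at key
  generalize ∑' n : ℕ, w n = S0 at hS0 key ⊢
  generalize ∑' n : ℕ, (n : ℝ) * w n = S1 at key ⊢
  generalize ∑' n : ℕ, (n : ℝ) ^ 2 * w n = S2 at key ⊢
  have hfactor : S0 / π * (π ^ 2 / 4 - θ ^ 2 * (S2 / S0 - (S1 / S0) ^ 2)) ≤ 0 := by
    convert key using 1
    field_simp
    ring
  exact sub_nonpos.mp (nonpos_of_mul_nonpos_right hfactor (by positivity))

end Weights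

lemma Fc_ofReal_mul_exp (a : ℕ → ℝ) (t θ : ℝ) :
    Fc a ((t : ℂ) * Complex.exp (Complex.I * (θ : ℂ))) =
      ∑' n : ℕ, ((a n * t ^ n : ℝ) : ℂ) * Complex.exp (((n * θ : ℝ) : ℂ) * Complex.I) := by
  refine tsum_congr fun n => ?_
  rw [mul_pow, ← Complex.exp_nat_mul]
  push_cast
  ring_nf

theorem pi_div_two_le_abs_mul_sdK {a : ℕ → ℝ} {t θ : ℝ} (hpos : ∀ n, 0 ≤ a n) (ha0 : 0 < a 0)
    (ht : 0 ≤ t) (hmom : ∀ k : ℕ, Summable fun n : ℕ => (n : ℝ) ^ k * (a n * t ^ n))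
    (hz : Fc a ((t : ℂ) * Complex.exp (Complex.I * (θ : ℂ))) = 0) :
    π / 2 ≤ |θ| * sdK a t := by
  have hw : ∀ n, 0 ≤ a n * t ^ n := fun n => mul_nonneg (hpos n) (pow_nonneg ht n)
  have h0 : Summable fun n : ℕ => a n * t ^ n := by simpa using hmom 0
  have hS0 : 0 < ∑' n : ℕ, a n * t ^ n := h0.tsum_pos hw 0 (by simpa using ha0)
  have hvar := pi_sq_div_four_le_sq_mul_variance hw hS0 h0 (by simpa using hmom 1) (hmom 2)
    (by rwa [Fc_ofReal_mul_exp] at hz)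
  have hvarK : varK a t = (∑' n : ℕ, (n : ℝ) ^ 2 * (a n * t ^ n)) / ∑' n : ℕ, a n * t ^ n -
      ((∑' n : ℕ, (n : ℝ) * (a n * t ^ n)) / ∑' n : ℕ, a n * t ^ n) ^ 2 := by
    simp only [varK, meanK, mul_assoc]
  calc π / 2 = √((π / 2) ^ 2) := (sqrt_sq (by positivity)).symm
    _ ≤ √(θ ^ 2 * varK a t) := sqrt_le_sqrt (by rw [hvarK]; linarith)
    _ = |θ| * sdK a t := by rw [sqrt_mul (sq_nonneg θ), sqrt_sq_eq_abs, sdK]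

theorem statement4_general (a : ℕ → ℝ) (R : ℝ≥0∞)
    (hpos : ∀ n, 0 ≤ a n) (ha0 : 0 < a 0)
    (hconv : ∀ t : ℝ, 0 ≤ t → ENNReal.ofReal t < R → Summable fun n => a n * t ^ n) :
    (∀ t θ : ℝ, 0 < t → ENNReal.ofReal t < R → θ ∈ Set.Icc (-Real.pi) Real.pi →
        Fc a ((t : ℂ) * Complex.exp (Complex.I * (θ : ℂ))) = 0 →
        Real.pi / 2 ≤ |θ| * sdK a t) ∧
    (∀ t θ : ℝ, 0 ≤ t → ENNReal.ofReal t < R → |θ| < Real.pi / (2 * sdK a t) →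
        Fc a ((t : ℂ) * Complex.exp (Complex.I * (θ : ℂ))) ≠ 0) := by
  have hzero {t θ : ℝ} (ht : 0 ≤ t) (htR : ENNReal.ofReal t < R)
      (hz : Fc a ((t : ℂ) * Complex.exp (Complex.I * (θ : ℂ))) = 0) : π / 2 ≤ |θ| * sdK a t :=
    pi_div_two_le_abs_mul_sdK hpos ha0 ht (summable_pow_mul_mul_pow_of_ofReal_lt hconv ht htR) hz
  refine ⟨fun t θ ht htR _ hz => hzero ht.le htR hz, fun t θ ht htR hθ hz => ?_⟩
  have hbound := hzero ht htR hz
  have hsd : 0 ≤ sdK a t := sqrt_nonneg _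
  rcases hsd.eq_or_lt with hsd_zero | hsd_pos
  · rw [← hsd_zero, mul_zero] at hbound
    linarith [pi_pos]
  · rw [lt_div_iff₀ (by positivity)] at hθ
    linarith

/-- Proposition 1.3.5. For `f ∈ K` with radius of convergence `R > 0`:
if `f(t e^{iθ}) = 0` with `t ∈ (0,R)` and `θ ∈ [-π,π]` then `|θ| σ_f(t) ≥ π/2`; consequently
`f` does not vanish on the region `{ t e^{iθ} : 0 ≤ t < R, |θ| < π/(2σ_f(t)) }`. -/
theorem statement4 (a : ℕ → ℝ) (R : ℝ≥0∞) (hR : 0 < R)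
    (hpos : ∀ n, 0 ≤ a n) (ha0 : 0 < a 0) (ha1 : ∃ n, 1 ≤ n ∧ 0 < a n)
    (hconv : ∀ t : ℝ, 0 ≤ t → ENNReal.ofReal t < R → Summable fun n => a n * t ^ n)
    (hdiv : ∀ t : ℝ, R < ENNReal.ofReal t → ¬ Summable fun n => a n * t ^ n) :
    (∀ t θ : ℝ, 0 < t → ENNReal.ofReal t < R → θ ∈ Set.Icc (-Real.pi) Real.pi →
        Fc a ((t : ℂ) * Complex.exp (Complex.I * (θ : ℂ))) = 0 →
        Real.pi / 2 ≤ |θ| * sdK a t) ∧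
    (∀ t θ : ℝ, 0 ≤ t → ENNReal.ofReal t < R → |θ| < Real.pi / (2 * sdK a t) →
        Fc a ((t : ℂ) * Complex.exp (Complex.I * (θ : ℂ))) ≠ 0) :=
  statement4_general a R hpos ha0 hconv

end
end

section
/- Let f ∈ K be an entire function whose order is ρ(f) = limsup_{t→∞} (log log f(t))/(log t) ∈ [0, ∞]. Then for every real p ≥ 1, limsup_{t→∞} (log(E(X_t^p)^{1/p}))/(log t) = ρ(f), the equality being an equality of limsups with values in [0, ∞]. -/
/-!
Write `f` for the power series, `m(t)` for the mean of its Khinchin family and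
`M_p(t) = E(X_t^p)^{1/p}`. Each of `log M_p(t)` and `log log f(t)` is bounded by the other,
evaluated at a fixed multiple of `t`, plus an error that is `o(log t)`; such a comparison cannot
increase `limsup (·) / log t`.

From below: Jensen's inequality gives `m(t) ≤ M_p(t)`, and the convexity of `s ↦ log f(e^s)`,
whose derivative is `m(e^s)`, gives `log f(t) ≤ log f(1) + m(t) log t`; hence
`log log f(t) ≤ log M_p(t) + log log t + O(1)`.

From above: with `N = log f(e² t)`, every `n` satisfies `n^p ≤ N^p + p^p e^{-N} e^{2n}`, and
summing against the weights `a_n t^n` gives `E(X_t^p) ≤ N^p + p^p f(e² t) e^{-N} / f(t)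
= N^p + p^p / f(t)`; hence `log M_p(t) ≤ log log f(e² t) + O(1)`.
-/

open Filter Topology MeasureTheory
open scoped ENNReal NNReal Classical

noncomputable section

open Real

lemma rpow_le_rpow_self_mul_exp {p x : ℝ} (hp : 0 < p) (hx : 0 ≤ x) :
    x ^ p ≤ p ^ p * exp x := by
  have hxp : x / p ≤ exp (x / p) := by linarith [add_one_le_exp (x / p)]
  calc x ^ p = p ^ p * (x / p) ^ p := by
        rw [div_rpow hx hp.le, mul_div_cancel₀ _ (rpow_pos_of_pos hp p).ne']
    _ ≤ p ^ p * exp (x / p) ^ p := by gcongr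
    _ = p ^ p * exp x := by rw [← exp_mul, div_mul_cancel₀ _ hp.ne']

lemma rpow_le_rpow_add_mul_exp {p x N : ℝ} (hp : 0 < p) (hx : 0 ≤ x) (hN : 0 ≤ N) :
    x ^ p ≤ N ^ p + p ^ p * exp (-N) * exp (2 * x) := by
  rcases le_or_gt x N with hxN | hNx
  · have : x ^ p ≤ N ^ p := rpow_le_rpow hx hxN hp.le
    have : 0 ≤ p ^ p * exp (-N) * exp (2 * x) := by positivity
    linarith
  · calc x ^ p ≤ p ^ p * exp x := rpow_le_rpow_self_mul_exp hp hx
      _ = p ^ p * exp (-x) * exp (2 * x) := by rw [mul_assoc, ← exp_add]; ring_nf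
      _ ≤ p ^ p * exp (-N) * exp (2 * x) := by gcongr
      _ ≤ N ^ p + p ^ p * exp (-N) * exp (2 * x) := le_add_of_nonneg_left (rpow_nonneg hN p)

lemma rpow_add_mul_sub_le_rpow {p m x : ℝ} (hp : 1 ≤ p) (hm : 0 < m) (hx : 0 ≤ x) :
    m ^ p + p * m ^ p / m * (x - m) ≤ x ^ p := by
  have hmp : 0 < m ^ p := rpow_pos_of_pos hm p
  have h := one_add_mul_self_le_rpow_one_add (s := x / m - 1) (by linarith [div_nonneg hx hm.le]) hp
  rw [add_sub_cancel, div_rpow hx hm.le, le_div_iff₀ hmp] at h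
  calc m ^ p + p * m ^ p / m * (x - m) = (1 + p * (x / m - 1)) * m ^ p := by
        field_simp
    _ ≤ x ^ p := h

theorem mul_tsum_le_tsum_of_supporting_line {w : ℕ → ℝ} {φ : ℝ → ℝ} {m c : ℝ}
    (hw : ∀ n, 0 ≤ w n) (hw₀ : Summable w) (hw₁ : Summable fun n : ℕ => (n : ℝ) * w n)
    (hφ : Summable fun n : ℕ => φ n * w n) (hm : ∑' n : ℕ, (n : ℝ) * w n = m * ∑' n, w n)
    (hline : ∀ n : ℕ, φ m + c * (n - m) ≤ φ n) :
    φ m * ∑' n, w n ≤ ∑' n : ℕ, φ n * w n := by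
  have hsum : HasSum (fun n : ℕ => (φ m + c * (n - m)) * w n) (φ m * ∑' n, w n) := by
    have h := (hw₀.hasSum.mul_left (φ m - c * m)).add (hw₁.hasSum.mul_left c)
    rw [hm, show (φ m - c * m) * ∑' n, w n + c * (m * ∑' n, w n) = φ m * ∑' n, w n by ring] at h
    exact h.congr_fun fun n => by ring
  exact hasSum_le (fun n => mul_le_mul_of_nonneg_right (hline n) (hw n)) hsum hφ.hasSum

theorem limsup_div_log_le_of_eventually_le {u w g : ℝ → ℝ} {k : ℝ} (hk : 0 < k)
    (hg : Tendsto (fun t => g t / log t) atTop (𝓝 0))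
    (h : ∀ᶠ t in atTop, u t ≤ w (k * t) + g t) :
    limsup (fun t => ((u t / log t : ℝ) : EReal)) atTop ≤
      limsup (fun t => ((w t / log t : ℝ) : EReal)) atTop := by
  refine (limsup_le_iff (by isBoundedDefault) (by isBoundedDefault)).2 fun c hc => ?_
  obtain ⟨d, hwd, hdc⟩ := EReal.lt_iff_exists_real_btwn.1 hc
  have hkt : Tendsto (fun t => k * t) atTop atTop := tendsto_id.const_mul_atTop hk
  have hw : ∀ᶠ t in atTop, w (k * t) < d * log (k * t) := by
    filter_upwards [hkt.eventually (eventually_lt_of_limsup_lt hwd),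
      hkt.eventually (tendsto_log_atTop.eventually_gt_atTop 0)] with t hwt hlog
    exact (div_lt_iff₀ hlog).1 (EReal.coe_lt_coe_iff.1 hwt)
  have hbound : Tendsto (fun t => (d * log k + g t) / log t + d) atTop (𝓝 d) := by
    simpa only [add_div, zero_add] using
      ((tendsto_const_nhds.div_atTop tendsto_log_atTop).add hg).add_const d
  filter_upwards [h, hw, eventually_gt_atTop 0, tendsto_log_atTop.eventually_gt_atTop 0,
    (EReal.tendsto_coe.2 hbound).eventually_lt_const hdc] with t hut hwt ht hlog hct
  refine lt_of_le_of_lt (EReal.coe_le_coe_iff.2 ?_) hct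
  rw [log_mul hk.ne' ht.ne'] at hwt
  rw [div_le_iff₀ hlog, add_mul, div_mul_cancel₀ _ hlog.ne']
  linarith

lemma tendsto_log_add_log_log_div_log :
    Tendsto (fun t => (log 2 + log (log t)) / log t) atTop (𝓝 0) := by
  have h := (tendsto_const_nhds (x := log 2)).div_atTop tendsto_id |>.add
    isLittleO_log_id_atTop.tendsto_div_nhds_zero
  rw [add_zero] at h
  exact (h.comp tendsto_log_atTop).congr fun t => by simp [add_div]

section KhinchinFamily

variable {a : ℕ → ℝ}

lemma summable_rpow_mul_mul_pow (hpos : ∀ n, 0 ≤ a n)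
    (hconv : ∀ t : ℝ, Summable fun n : ℕ => a n * t ^ n) {p t : ℝ} (hp : 0 < p) (ht : 0 ≤ t) :
    Summable fun n : ℕ => (n : ℝ) ^ p * a n * t ^ n := by
  refine .of_nonneg_of_le (fun n => by have := hpos n; positivity) (fun n => ?_)
    ((hconv (exp 1 * t)).mul_left (p ^ p))
  have hn : (n : ℝ) ^ p ≤ p ^ p * exp n := rpow_le_rpow_self_mul_exp hp n.cast_nonneg
  calc (n : ℝ) ^ p * a n * t ^ n ≤ p ^ p * exp n * a n * t ^ n := by
        have := hpos n; gcongr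
    _ = p ^ p * (a n * (exp 1 * t) ^ n) := by rw [mul_pow, ← exp_nat_mul, mul_one]; ring

lemma tendsto_psum_atTop (hpos : ∀ n, 0 ≤ a n) (ha1 : ∃ n, 1 ≤ n ∧ 0 < a n)
    (hconv : ∀ t : ℝ, Summable fun n : ℕ => a n * t ^ n) :
    Tendsto (psum a) atTop atTop := by
  obtain ⟨k, hk, hak⟩ := ha1
  refine tendsto_atTop_mono' atTop ?_ ((tendsto_pow_atTop (n := k) (by omega)).const_mul_atTop hak)
  filter_upwards [eventually_ge_atTop 0] with t ht
  exact (hconv t).le_tsum k fun n _ => by have := hpos n; positivity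

lemma summable_nat_mul_mul_pow (hpos : ∀ n, 0 ≤ a n)
    (hconv : ∀ t : ℝ, Summable fun n : ℕ => a n * t ^ n) {t : ℝ} (ht : 0 ≤ t) :
    Summable fun n : ℕ => (n : ℝ) * (a n * t ^ n) := by
  simpa only [rpow_one, mul_assoc] using summable_rpow_mul_mul_pow hpos hconv one_pos ht

lemma tsum_nat_mul_eq_meanK_mul {t : ℝ} (hf : psum a t ≠ 0) :
    ∑' n : ℕ, (n : ℝ) * (a n * t ^ n) = meanK a t * ∑' n : ℕ, a n * t ^ n := by
  simp_rw [← mul_assoc]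
  exact (div_mul_cancel₀ _ hf).symm

lemma meanK_pos (hpos : ∀ n, 0 ≤ a n) (ha1 : ∃ n, 1 ≤ n ∧ 0 < a n)
    (hconv : ∀ t : ℝ, Summable fun n : ℕ => a n * t ^ n) {t : ℝ} (ht : 0 < t) :
    0 < meanK a t := by
  obtain ⟨k, hk, hak⟩ := ha1
  have hk' : (0 : ℝ) < k := by exact_mod_cast hk
  have hterm (n : ℕ) : 0 ≤ a n * t ^ n := by have := hpos n; positivity
  rw [meanK]
  simp_rw [mul_assoc]
  exact div_pos ((summable_nat_mul_mul_pow hpos hconv ht.le).tsum_pos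
      (fun n => mul_nonneg n.cast_nonneg (hterm n)) k (by positivity))
    ((hconv t).tsum_pos hterm k (by positivity))

lemma meanK_rpow_le_momK (hpos : ∀ n, 0 ≤ a n)
    (hconv : ∀ t : ℝ, Summable fun n : ℕ => a n * t ^ n) {p t : ℝ} (hp : 1 ≤ p) (ht : 0 ≤ t)
    (hf : 0 < psum a t) (hm : 0 < meanK a t) :
    meanK a t ^ p ≤ momK a p t := by
  have hjensen := mul_tsum_le_tsum_of_supporting_line (w := fun n => a n * t ^ n)
    (φ := fun x => x ^ p) (c := p * meanK a t ^ p / meanK a t)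
    (fun n => by have := hpos n; positivity) (hconv t)
    (summable_nat_mul_mul_pow hpos hconv ht)
    (by simpa only [mul_assoc] using summable_rpow_mul_mul_pow hpos hconv (by linarith) ht)
    (tsum_nat_mul_eq_meanK_mul hf.ne')
    (fun n => rpow_add_mul_sub_le_rpow hp hm n.cast_nonneg)
  simp only [← mul_assoc] at hjensen
  exact (le_div_iff₀ hf).2 hjensen

lemma log_psum_le_log_psum_one_add (hpos : ∀ n, 0 ≤ a n)
    (hconv : ∀ t : ℝ, Summable fun n : ℕ => a n * t ^ n) {t : ℝ} (ht : 0 < t)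
    (hf : 0 < psum a t) :
    log (psum a t) ≤ log (psum a 1) + meanK a t * log t := by
  have hterm (n : ℕ) : exp (-(n * log t)) * (a n * t ^ n) = a n * 1 ^ n := by
    rw [← log_pow, exp_neg, exp_log (pow_pos ht n), one_pow]
    field_simp
  -- `x ↦ t ^ (-x)` is convex, and its Jensen inequality at the mean is the log-convexity of `f`.
  have hjensen := mul_tsum_le_tsum_of_supporting_line (w := fun n => a n * t ^ n)
    (φ := fun x => exp (-(x * log t))) (c := -(log t * exp (-(meanK a t * log t))))
    (fun n => by have := hpos n; positivity) (hconv t)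
    (summable_nat_mul_mul_pow hpos hconv ht.le)
    (by simpa only [hterm] using hconv 1)
    (tsum_nat_mul_eq_meanK_mul hf.ne')
    (fun n => by
      have := add_one_le_exp ((meanK a t - n) * log t)
      calc _ = exp (-(meanK a t * log t)) * ((meanK a t - n) * log t + 1) := by ring
        _ ≤ exp (-(meanK a t * log t)) * exp ((meanK a t - n) * log t) := by gcongr
        _ = _ := by rw [← exp_add]; ring_nf)
  simp only [hterm] at hjensen
  change exp _ * psum a t ≤ psum a 1 at hjensen
  have h := log_le_log (by positivity) hjensen
  rw [log_mul (exp_pos _).ne' hf.ne', log_exp] at h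
  linarith

lemma tsum_rpow_mul_mul_pow_le (hpos : ∀ n, 0 ≤ a n)
    (hconv : ∀ t : ℝ, Summable fun n : ℕ => a n * t ^ n) {p t N : ℝ} (hp : 0 < p) (ht : 0 ≤ t)
    (hN : 0 ≤ N) :
    ∑' n : ℕ, (n : ℝ) ^ p * a n * t ^ n
      ≤ N ^ p * psum a t + p ^ p * exp (-N) * psum a (exp 2 * t) := by
  have hterm (n : ℕ) : (n : ℝ) ^ p * a n * t ^ n
      ≤ N ^ p * (a n * t ^ n) + p ^ p * exp (-N) * (a n * (exp 2 * t) ^ n) := by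
    have := hpos n
    calc (n : ℝ) ^ p * a n * t ^ n
        ≤ (N ^ p + p ^ p * exp (-N) * exp (2 * n)) * (a n * t ^ n) := by
          rw [mul_assoc]; gcongr; exact rpow_le_rpow_add_mul_exp hp n.cast_nonneg hN
      _ = _ := by rw [mul_pow, ← exp_nat_mul]; ring_nf
  have h₁ := (hconv t).mul_left (N ^ p)
  have h₂ := (hconv (exp 2 * t)).mul_left (p ^ p * exp (-N))
  rw [psum, psum, ← tsum_mul_left, ← tsum_mul_left, ← h₁.tsum_add h₂]
  exact (summable_rpow_mul_mul_pow hpos hconv hp ht).tsum_le_tsum hterm (h₁.add h₂)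

lemma momK_le_log_psum_rpow_add (hpos : ∀ n, 0 ≤ a n)
    (hconv : ∀ t : ℝ, Summable fun n : ℕ => a n * t ^ n) {p t : ℝ} (hp : 0 < p) (ht : 0 ≤ t)
    (hf : 1 ≤ psum a t) (hf₂ : 1 ≤ psum a (exp 2 * t)) :
    momK a p t ≤ log (psum a (exp 2 * t)) ^ p + p ^ p := by
  have h := tsum_rpow_mul_mul_pow_le hpos hconv hp ht (log_nonneg hf₂)
  rw [exp_neg, exp_log (by linarith), mul_assoc, inv_mul_cancel₀ (by linarith), mul_one] at h
  rw [momK, div_le_iff₀ (by change 0 < psum a t; linarith)]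
  change _ ≤ _ * psum a t
  have : 0 ≤ p ^ p := by positivity
  nlinarith [rpow_nonneg (log_nonneg hf₂) p]

lemma eventually_log_log_psum_le (hpos : ∀ n, 0 ≤ a n) (ha1 : ∃ n, 1 ≤ n ∧ 0 < a n)
    (hconv : ∀ t : ℝ, Summable fun n : ℕ => a n * t ^ n) {p : ℝ} (hp : 1 ≤ p) :
    ∀ᶠ t in atTop, log (log (psum a t)) ≤ log (momK a p t ^ (1 / p)) + (log 2 + log (log t)) := by
  have hf := tendsto_psum_atTop hpos ha1 hconv
  filter_upwards [eventually_gt_atTop 1, hf.eventually_gt_atTop 1,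
    (tendsto_log_atTop.comp hf).eventually_ge_atTop (2 * log (psum a 1))] with t ht hf₁ hf₂
  have hm := meanK_pos hpos ha1 hconv (t := t) (by linarith)
  have hjensen := meanK_rpow_le_momK hpos hconv hp (t := t) (by linarith) (by linarith) hm
  have hmom : meanK a t ≤ momK a p t ^ (1 / p) := by
    rw [one_div, le_rpow_inv_iff_of_pos hm.le ((rpow_pos_of_pos hm p).le.trans hjensen)
      (by linarith)]
    exact hjensen
  have hconvex := log_psum_le_log_psum_one_add hpos hconv (t := t) (by linarith) (by linarith)
  have hlogt := log_pos ht
  have hL : log (psum a t) ≤ 2 * momK a p t ^ (1 / p) * log t := by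
    simp only [Function.comp_apply] at hf₂
    linarith [mul_le_mul_of_nonneg_right hmom hlogt.le]
  calc log (log (psum a t)) ≤ log (2 * momK a p t ^ (1 / p) * log t) := log_le_log (log_pos hf₁) hL
    _ = _ := by
      rw [log_mul (mul_pos two_pos (hm.trans_le hmom)).ne' hlogt.ne', log_mul two_ne_zero (by linarith)]
      ring

lemma eventually_log_momK_rpow_le (hpos : ∀ n, 0 ≤ a n) (ha1 : ∃ n, 1 ≤ n ∧ 0 < a n)
    (hconv : ∀ t : ℝ, Summable fun n : ℕ => a n * t ^ n) {p : ℝ} (hp : 1 ≤ p) :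
    ∀ᶠ t in atTop, log (momK a p t ^ (1 / p)) ≤ log (log (psum a (exp 2 * t))) + log 2 / p := by
  have hp₀ : 0 < p := by linarith
  have hf := tendsto_psum_atTop hpos ha1 hconv
  filter_upwards [eventually_gt_atTop 0, hf.eventually_ge_atTop 1,
    (tendsto_id.const_mul_atTop (exp_pos 2)).eventually (hf.eventually_ge_atTop (exp p))]
    with t ht hf₁ hf₂
  have hf₂' : 1 ≤ psum a (exp 2 * t) := (one_le_exp hp₀.le).trans hf₂
  have hN : p ≤ log (psum a (exp 2 * t)) := (le_log_iff_exp_le (by linarith)).2 hf₂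
  have hmom : momK a p t ≤ 2 * log (psum a (exp 2 * t)) ^ p := by
    have := momK_le_log_psum_rpow_add hpos hconv hp₀ ht.le hf₁ hf₂'
    have := rpow_le_rpow hp₀.le hN hp₀.le
    linarith
  have hm := meanK_pos hpos ha1 hconv ht
  have hmom₀ : 0 < momK a p t :=
    (rpow_pos_of_pos hm p).trans_le (meanK_rpow_le_momK hpos hconv hp ht.le (by linarith) hm)
  calc log (momK a p t ^ (1 / p)) = log (momK a p t) / p := by rw [log_rpow hmom₀]; ring
    _ ≤ log (2 * log (psum a (exp 2 * t)) ^ p) / p := by gcongr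
    _ = _ := by
      rw [log_mul two_ne_zero (rpow_pos_of_pos (by linarith) p).ne', log_rpow (by linarith)]
      field_simp
      ring

end KhinchinFamily

theorem statement9_general (a : ℕ → ℝ)
    (hpos : ∀ n, 0 ≤ a n) (ha1 : ∃ n, 1 ≤ n ∧ 0 < a n)
    (hconv : ∀ t : ℝ, Summable fun n : ℕ => a n * t ^ n) :
    ∀ p : ℝ, 1 ≤ p →
      Filter.limsup
          (fun t : ℝ => ((Real.log (momK a p t ^ (1 / p)) / Real.log t : ℝ) : EReal)) atTop =
        Filter.limsup
          (fun t : ℝ => ((Real.log (Real.log (psum a t)) / Real.log t : ℝ) : EReal)) atTop := by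
  intro p hp
  refine le_antisymm ?_ ?_
  · exact limsup_div_log_le_of_eventually_le (exp_pos 2)
      (tendsto_const_nhds.div_atTop tendsto_log_atTop)
      (eventually_log_momK_rpow_le hpos ha1 hconv hp)
  · exact limsup_div_log_le_of_eventually_le one_pos tendsto_log_add_log_log_div_log
      (by simpa only [one_mul] using eventually_log_log_psum_le hpos ha1 hconv hp)

/-- Theorem 2.5.1. For `f ∈ K` entire of order
`ρ(f) = limsup_{t→∞} log log f(t) / log t ∈ [0,∞]` and every real `p ≥ 1`,
`limsup_{t→∞} log(E(X_t^p)^{1/p}) / log t = ρ(f)` (limsups taken in `EReal`). -/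
theorem statement9 (a : ℕ → ℝ)
    (hpos : ∀ n, 0 ≤ a n) (ha0 : 0 < a 0) (ha1 : ∃ n, 1 ≤ n ∧ 0 < a n)
    (hconv : ∀ t : ℝ, Summable fun n : ℕ => a n * t ^ n) :
    ∀ p : ℝ, 1 ≤ p →
      Filter.limsup
          (fun t : ℝ => ((Real.log (momK a p t ^ (1 / p)) / Real.log t : ℝ) : EReal)) atTop =
        Filter.limsup
          (fun t : ℝ => ((Real.log (Real.log (psum a t)) / Real.log t : ℝ) : EReal)) atTop :=
  statement9_general a hpos ha1 hconv
end
end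

section
/- Let f ∈ K be entire of order ρ(f) ∈ [0,∞]. Then, with all limits as t → ∞ and taken in [0,∞]: liminf σ_f²(t)/m_f(t) ≤ liminf (log m_f(t))/(log t) ≤ liminf (log log f(t))/(log t) ≤ limsup (log log f(t))/(log t) = limsup (log m_f(t))/(log t) = ρ(f) ≤ limsup σ_f²(t)/m_f(t). -/
open Filter Topology MeasureTheory
open scoped ENNReal NNReal Classical

noncomputable section

/-!
With `s = log t` one has `d (log f) / ds = m_f` and `d (log m_f) / ds = σ_f² / m_f ≥ 0`.
Integrating the second identity turns bounds on `σ_f² / m_f` into bounds on `log m_f / log t`,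
which gives the outer inequalities. Since `m_f` increases, integrating the first identity between
`t ^ θ` and `t` gives `m_f (t ^ θ) ≤ log f (t)` for large `t` (any `θ < 1`), and between `1` and
`t` gives `log f (t) ≤ 2 m_f (t) log t`. The first bound compares `log m_f / log t` with
`log log f / log t` from below up to the factor `θ`, the second from above up to an error
`log (2 log t) / log t → 0`.
-/

open Set Real

section DivLog

def liminfDivLog (u : ℝ → ℝ) : EReal := liminf (fun t => ((u t / log t : ℝ) : EReal)) atTop

def limsupDivLog (u : ℝ → ℝ) : EReal := limsup (fun t => ((u t / log t : ℝ) : EReal)) atTop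

lemma tendsto_const_div_log_atTop (D : ℝ) : Tendsto (fun t => D / log t) atTop (𝓝 0) := by
  simpa [div_eq_mul_inv] using tendsto_log_atTop.inv_tendsto_atTop.const_mul D

lemma tendsto_log_two_mul_log_div_log :
    Tendsto (fun t => log (2 * log t) / log t) atTop (𝓝 0) :=
  ((isLittleO_log_id_atTop.comp_tendsto (tendsto_log_atTop.const_mul_atTop two_pos)).trans_isBigO
    (Asymptotics.isBigO_const_mul_self 2 log atTop)).tendsto_div_nhds_zero

lemma EReal.coe_le_liminf_of_tendsto {α : Type*} {l : Filter α} [l.NeBot] {w y : α → ℝ} {c : ℝ}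
    (hw : Tendsto w l (𝓝 c)) (h : ∀ᶠ x in l, w x ≤ y x) :
    (c : EReal) ≤ liminf (fun x => (y x : EReal)) l := by
  rw [← ((continuous_coe_real_ereal.tendsto c).comp hw).liminf_eq]
  exact liminf_le_liminf (h.mono fun _ hx => EReal.coe_le_coe hx)

lemma EReal.limsup_le_coe_of_tendsto {α : Type*} {l : Filter α} [l.NeBot] {w y : α → ℝ} {c : ℝ}
    (hw : Tendsto w l (𝓝 c)) (h : ∀ᶠ x in l, y x ≤ w x) :
    limsup (fun x => (y x : EReal)) l ≤ c := by
  rw [← ((continuous_coe_real_ereal.tendsto c).comp hw).limsup_eq]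
  exact limsup_le_limsup (h.mono fun _ hx => EReal.coe_le_coe hx)

lemma EReal.coe_le_of_forall_mul_le {c : ℝ} {y : EReal}
    (h : ∀ θ ∈ Ioo (0 : ℝ) 1, ((θ * c : ℝ) : EReal) ≤ y) : (c : EReal) ≤ y := by
  have hlim : Tendsto (fun θ : ℝ => ((θ * c : ℝ) : EReal)) (𝓝[<] 1) (𝓝 c) := by
    have : Tendsto (fun θ : ℝ => θ * c) (𝓝 1) (𝓝 c) := by
      simpa using (tendsto_id (x := 𝓝 (1 : ℝ))).mul_const c
    exact (continuous_coe_real_ereal.tendsto c).comp (this.mono_left nhdsWithin_le_nhds)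
  exact le_of_tendsto hlim (Filter.mem_of_superset (Ioo_mem_nhdsLT one_pos) h)

lemma Filter.Frequently.rpow_atTop {p : ℝ → Prop} (hp : ∃ᶠ s in atTop, p s) {θ : ℝ}
    (hθ : 0 < θ) : ∃ᶠ t in atTop, p (t ^ θ) :=
  (tendsto_rpow_atTop (inv_pos.2 hθ)).frequently <|
    (hp.and_eventually (eventually_gt_atTop 0)).mono fun s hs => by
      rw [← rpow_mul hs.2.le, inv_mul_cancel₀ hθ.ne', rpow_one]
      exact hs.1

lemma liminfDivLog_le_of_rpow_le {u v : ℝ → ℝ}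
    (h : ∀ θ ∈ Ioo (0 : ℝ) 1, ∀ᶠ t in atTop, u (t ^ θ) ≤ v t) :
    liminfDivLog u ≤ liminfDivLog v := by
  refine EReal.ge_of_forall_gt_iff_ge.1 fun c hc => EReal.coe_le_of_forall_mul_le fun θ hθ => ?_
  have hu : ∀ᶠ s in atTop, c < u s / log s :=
    (eventually_lt_of_lt_liminf hc).mono fun _ => EReal.coe_lt_coe_iff.1
  refine EReal.coe_le_liminf_of_tendsto tendsto_const_nhds ?_
  filter_upwards [(tendsto_rpow_atTop hθ.1).eventually hu, h θ hθ, eventually_gt_atTop 1]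
    with t hut huv ht
  rw [log_rpow (by linarith), lt_div_iff₀ (mul_pos hθ.1 (log_pos ht))] at hut
  rw [le_div_iff₀ (log_pos ht)]
  linarith

lemma limsupDivLog_le_of_rpow_le {u v : ℝ → ℝ}
    (h : ∀ θ ∈ Ioo (0 : ℝ) 1, ∀ᶠ t in atTop, u (t ^ θ) ≤ v t) :
    limsupDivLog u ≤ limsupDivLog v := by
  refine EReal.ge_of_forall_gt_iff_ge.1 fun c hc => EReal.coe_le_of_forall_mul_le fun θ hθ => ?_
  have hu : ∃ᶠ s in atTop, c < u s / log s :=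
    (frequently_lt_of_lt_limsup (by isBoundedDefault) hc).mono fun _ => EReal.coe_lt_coe_iff.1
  refine le_limsup_of_frequently_le ?_ (by isBoundedDefault)
  refine ((hu.rpow_atTop hθ.1).and_eventually ((h θ hθ).and (eventually_gt_atTop 1))).mono ?_
  rintro t ⟨hut, huv, ht⟩
  rw [log_rpow (by linarith), lt_div_iff₀ (mul_pos hθ.1 (log_pos ht))] at hut
  rw [EReal.coe_le_coe_iff, le_div_iff₀ (log_pos ht)]
  linarith

lemma limsupDivLog_le_of_le_add {u v w : ℝ → ℝ}
    (hw : Tendsto (fun t => w t / log t) atTop (𝓝 0)) (h : ∀ᶠ t in atTop, v t ≤ u t + w t) :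
    limsupDivLog v ≤ limsupDivLog u := by
  refine EReal.le_of_forall_lt_iff_le.1 fun c hc => ?_
  have hu : ∀ᶠ t in atTop, u t / log t < c :=
    (eventually_lt_of_limsup_lt hc).mono fun _ => EReal.coe_lt_coe_iff.1
  refine EReal.limsup_le_coe_of_tendsto (by simpa using hw.const_add c) ?_
  filter_upwards [hu, h, eventually_gt_atTop 1] with t hut hvu ht
  rw [div_lt_iff₀ (log_pos ht)] at hut
  rw [div_le_iff₀ (log_pos ht), add_mul, div_mul_cancel₀ _ (log_pos ht).ne']
  linarith

end DivLog

section LogDerivative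

variable {g h : ℝ → ℝ}

lemma mul_log_sub_le_sub_of_le (hg : ∀ t > 0, HasDerivAt g (h t / t) t) {u x c : ℝ}
    (hu : 0 < u) (hux : u ≤ x) (hc : ∀ t ∈ Icc u x, c ≤ h t) :
    c * (log x - log u) ≤ g x - g u := by
  have hmono : MonotoneOn (fun t => g t - c * log t) (Icc u x) := by
    refine monotoneOn_of_hasDerivWithinAt_nonneg (convex_Icc u x)
      (f' := fun t => (h t - c) / t) (fun t ht => ?_) (fun t ht => ?_) (fun t ht => ?_)
    · have ht0 : 0 < t := hu.trans_le ht.1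
      exact ((hg t ht0).continuousAt.sub
        ((continuousAt_log ht0.ne').const_mul c)).continuousWithinAt
    · rw [interior_Icc] at ht ⊢
      have ht0 : 0 < t := hu.trans ht.1
      have := (hg t ht0).sub ((hasDerivAt_log ht0.ne').const_mul c)
      rw [← div_eq_mul_inv, ← sub_div] at this
      exact this.hasDerivWithinAt
    · rw [interior_Icc] at ht
      exact div_nonneg (sub_nonneg.2 (hc t (Ioo_subset_Icc_self ht))) (hu.trans ht.1).le
  have := hmono ⟨le_rfl, hux⟩ ⟨hux, le_rfl⟩ hux
  linarith

lemma sub_le_mul_log_sub_of_le (hg : ∀ t > 0, HasDerivAt g (h t / t) t) {u x c : ℝ}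
    (hu : 0 < u) (hux : u ≤ x) (hc : ∀ t ∈ Icc u x, h t ≤ c) :
    g x - g u ≤ c * (log x - log u) := by
  have := mul_log_sub_le_sub_of_le (g := -g) (h := -h) (c := -c)
    (fun t ht => by simpa only [Pi.neg_apply, neg_div] using (hg t ht).neg) hu hux
    (fun t ht => neg_le_neg (hc t ht))
  simp only [Pi.neg_apply] at this
  linarith

lemma liminf_le_liminfDivLog (hg : ∀ t > 0, HasDerivAt g (h t / t) t) :
    liminf (fun t => (h t : EReal)) atTop ≤ liminfDivLog g := by
  refine EReal.ge_of_forall_gt_iff_ge.1 fun c hc => ?_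
  obtain ⟨s, hs⟩ := eventually_atTop.1
    ((eventually_lt_of_lt_liminf hc).mono fun _ => EReal.coe_lt_coe_iff.1)
  set u := max s 1
  have hu : 1 ≤ u := le_max_right s 1
  refine EReal.coe_le_liminf_of_tendsto (w := fun x => c + (g u - c * log u) / log x)
    (by simpa using (tendsto_const_div_log_atTop _).const_add c) ?_
  filter_upwards [eventually_gt_atTop u] with x hx
  have hx0 : 0 < log x := log_pos (hu.trans_lt hx)
  have := mul_log_sub_le_sub_of_le hg (by linarith) hx.le
    fun t ht => (hs t ((le_max_left s 1).trans ht.1)).le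
  rw [le_div_iff₀ hx0, add_mul, div_mul_cancel₀ _ hx0.ne']
  linarith

lemma limsupDivLog_le_limsup (hg : ∀ t > 0, HasDerivAt g (h t / t) t) :
    limsupDivLog g ≤ limsup (fun t => (h t : EReal)) atTop := by
  have := liminf_le_liminfDivLog (g := -g) (h := -h)
    (fun t ht => by simpa only [Pi.neg_apply, neg_div] using (hg t ht).neg)
  simp only [liminfDivLog, Pi.neg_apply, neg_div, EReal.coe_neg] at this
  rwa [← Pi.neg_def, ← Pi.neg_def, EReal.liminf_neg, EReal.liminf_neg, EReal.neg_le_neg_iff]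
    at this

end LogDerivative

section PowerSeries

def momentSum (a : ℕ → ℝ) (k : ℕ) (t : ℝ) : ℝ := ∑' n : ℕ, (n : ℝ) ^ k * a n * t ^ n

variable {a : ℕ → ℝ}

lemma psum_eq_momentSum : psum a = momentSum a 0 := by
  funext t
  simp [psum, momentSum]

lemma meanK_eq_momentSum (t : ℝ) : meanK a t = momentSum a 1 t / momentSum a 0 t := by
  simp [meanK, momentSum]

lemma varK_eq_momentSum (t : ℝ) :
    varK a t = momentSum a 2 t / momentSum a 0 t - meanK a t ^ 2 := by
  simp [varK, momentSum]

variable (hpos : ∀ n, 0 ≤ a n) (hconv : ∀ t : ℝ, Summable fun n : ℕ => a n * t ^ n)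
include hpos hconv

lemma summable_momentSum (k : ℕ) {t : ℝ} (ht : 0 ≤ t) :
    Summable fun n : ℕ => (n : ℝ) ^ k * a n * t ^ n := by
  refine (hconv (2 ^ k * t)).of_nonneg_of_le (fun n => by have := hpos n; positivity) fun n => ?_
  have hn : (n : ℝ) ^ k ≤ (2 ^ k) ^ n := by
    rw [← pow_mul, Nat.mul_comm k n, pow_mul]
    exact pow_le_pow_left₀ n.cast_nonneg (by exact_mod_cast n.lt_two_pow_self.le) k
  calc (n : ℝ) ^ k * a n * t ^ n ≤ (2 ^ k) ^ n * a n * t ^ n := by have := hpos n; gcongr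
    _ = a n * (2 ^ k * t) ^ n := by ring

lemma hasDerivAt_momentSum (k : ℕ) {t : ℝ} (ht : 0 < t) :
    HasDerivAt (momentSum a k) (momentSum a (k + 1) t / t) t := by
  have hshift (z : ℝ) (hz : z ≠ 0) (n : ℕ) :
      (n : ℝ) ^ (k + 1) * a n * z ^ (n - 1) = (n : ℝ) ^ (k + 1) * a n * z ^ n / z := by
    rcases n with _ | n
    · simp
    · rw [Nat.add_sub_cancel, pow_succ z, ← mul_assoc, mul_div_cancel_right₀ _ hz]
  have hderiv (n : ℕ) (z : ℝ) : HasDerivAt (fun z => (n : ℝ) ^ k * a n * z ^ n)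
      ((n : ℝ) ^ (k + 1) * a n * z ^ (n - 1)) z := by
    have := (hasDerivAt_pow n z).const_mul ((n : ℝ) ^ k * a n)
    rwa [← mul_assoc, mul_right_comm _ (a n), ← pow_succ] at this
  set T := t + 1
  have hT : 0 < T := by positivity
  have hbound (n : ℕ) (z : ℝ) (hz : z ∈ Ioo (-T) T) :
      ‖(n : ℝ) ^ (k + 1) * a n * z ^ (n - 1)‖ ≤ (n : ℝ) ^ (k + 1) * a n * T ^ (n - 1) := by
    rw [norm_mul, norm_pow, Real.norm_of_nonneg (by have := hpos n; positivity)]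
    have := hpos n
    gcongr
    exact abs_le.2 ⟨hz.1.le, hz.2.le⟩
  have hsum := ((summable_momentSum hpos hconv (k + 1) hT.le).div_const T).congr
    fun n => (hshift T hT.ne' n).symm
  have hvalue : momentSum a (k + 1) t / t = ∑' n : ℕ, (n : ℝ) ^ (k + 1) * a n * t ^ (n - 1) := by
    rw [momentSum, ← tsum_div_const]
    exact tsum_congr fun n => (hshift t ht.ne' n).symm
  rw [hvalue]
  exact hasDerivAt_tsum_of_isPreconnected hsum isOpen_Ioo (convex_Ioo _ _).isPreconnected
    (fun n z _ => hderiv n z) hbound (y₀ := 0) ⟨by linarith, hT⟩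
    (summable_momentSum hpos hconv k le_rfl) ⟨by linarith, by linarith⟩

variable (ha1 : ∃ n, 1 ≤ n ∧ 0 < a n)
include ha1

lemma momentSum_pos (k : ℕ) {t : ℝ} (ht : 0 < t) : 0 < momentSum a k t := by
  obtain ⟨N, hN1, hN⟩ := ha1
  have hN0 : (0 : ℝ) < N := by exact_mod_cast hN1
  exact (by positivity : 0 < (N : ℝ) ^ k * a N * t ^ N).trans_le <|
    (summable_momentSum hpos hconv k ht.le).le_tsum N fun n _ => by have := hpos n; positivity

lemma psum_pos {t : ℝ} (ht : 0 < t) : 0 < psum a t := by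
  rw [psum_eq_momentSum]
  exact momentSum_pos hpos hconv ha1 0 ht

lemma meanK_pos_s10 {t : ℝ} (ht : 0 < t) : 0 < meanK a t := by
  rw [meanK_eq_momentSum]
  exact div_pos (momentSum_pos hpos hconv ha1 1 ht) (momentSum_pos hpos hconv ha1 0 ht)

lemma varK_eq_tsum {t : ℝ} (ht : 0 < t) :
    varK a t = (∑' n : ℕ, ((n : ℝ) - meanK a t) ^ 2 * a n * t ^ n) / psum a t := by
  have hM (k : ℕ) : HasSum (fun n : ℕ => (n : ℝ) ^ k * a n * t ^ n) (momentSum a k t) :=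
    (summable_momentSum hpos hconv k ht.le).hasSum
  have hcentral : HasSum (fun n : ℕ => ((n : ℝ) - meanK a t) ^ 2 * a n * t ^ n)
      (momentSum a 2 t - 2 * meanK a t * momentSum a 1 t + meanK a t ^ 2 * momentSum a 0 t) := by
    refine (((hM 2).sub ((hM 1).mul_left (2 * meanK a t))).add
      ((hM 0).mul_left (meanK a t ^ 2))).congr_fun fun n => ?_
    ring
  have h0 := (momentSum_pos hpos hconv ha1 0 ht).ne'
  rw [hcentral.tsum_eq, varK_eq_momentSum, psum_eq_momentSum, meanK_eq_momentSum]
  field_simp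
  ring

lemma varK_nonneg {t : ℝ} (ht : 0 < t) : 0 ≤ varK a t := by
  rw [varK_eq_tsum hpos hconv ha1 ht]
  exact div_nonneg (tsum_nonneg fun n => by have := hpos n; positivity)
    (psum_pos hpos hconv ha1 ht).le

lemma hasDerivAt_meanK {t : ℝ} (ht : 0 < t) : HasDerivAt (meanK a) (varK a t / t) t := by
  have h0 := (momentSum_pos hpos hconv ha1 0 ht).ne'
  have hvalue : varK a t / t = (momentSum a 2 t / t * momentSum a 0 t
      - momentSum a 1 t * (momentSum a 1 t / t)) / momentSum a 0 t ^ 2 := by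
    rw [varK_eq_momentSum, meanK_eq_momentSum]
    field_simp
  rw [hvalue, show meanK a = fun t => momentSum a 1 t / momentSum a 0 t from
    funext meanK_eq_momentSum]
  exact (hasDerivAt_momentSum hpos hconv 1 ht).div (hasDerivAt_momentSum hpos hconv 0 ht) h0

lemma hasDerivAt_log_psum {t : ℝ} (ht : 0 < t) :
    HasDerivAt (fun t => log (psum a t)) (meanK a t / t) t := by
  rw [psum_eq_momentSum, meanK_eq_momentSum, div_right_comm]
  exact (hasDerivAt_momentSum hpos hconv 0 ht).log (momentSum_pos hpos hconv ha1 0 ht).ne'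

lemma hasDerivAt_log_meanK {t : ℝ} (ht : 0 < t) :
    HasDerivAt (fun t => log (meanK a t)) (varK a t / meanK a t / t) t := by
  rw [div_right_comm]
  exact (hasDerivAt_meanK hpos hconv ha1 ht).log (meanK_pos_s10 hpos hconv ha1 ht).ne'

lemma meanK_monotoneOn : MonotoneOn (meanK a) (Ioi 0) := by
  intro u hu x hx hux
  have := mul_log_sub_le_sub_of_le (fun _ ht => hasDerivAt_log_meanK hpos hconv ha1 ht) hu hux
    (c := 0) fun t ht => div_nonneg (varK_nonneg hpos hconv ha1 (hu.trans_le ht.1))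
      (meanK_pos_s10 hpos hconv ha1 (hu.trans_le ht.1)).le
  rw [zero_mul, sub_nonneg] at this
  exact (log_le_log_iff (meanK_pos_s10 hpos hconv ha1 hu) (meanK_pos_s10 hpos hconv ha1 hx)).1 this

lemma meanK_mul_log_le_log_psum_sub {u x : ℝ} (hu : 0 < u) (hux : u ≤ x) :
    meanK a u * (log x - log u) ≤ log (psum a x) - log (psum a u) :=
  mul_log_sub_le_sub_of_le (fun _ ht => hasDerivAt_log_psum hpos hconv ha1 ht) hu hux
    fun _ ht => meanK_monotoneOn hpos hconv ha1 hu (hu.trans_le ht.1) ht.1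

lemma log_psum_sub_le_meanK_mul_log {u x : ℝ} (hu : 0 < u) (hux : u ≤ x) :
    log (psum a x) - log (psum a u) ≤ meanK a x * (log x - log u) :=
  sub_le_mul_log_sub_of_le (fun _ ht => hasDerivAt_log_psum hpos hconv ha1 ht) hu hux
    fun _ ht => meanK_monotoneOn hpos hconv ha1 (hu.trans_le ht.1) (hu.trans_le hux) ht.2

lemma tendsto_log_psum_atTop : Tendsto (fun t => log (psum a t)) atTop atTop := by
  refine tendsto_atTop_mono' atTop ?_ (tendsto_atTop_add_const_left _ (log (psum a 1))
    (tendsto_log_atTop.const_mul_atTop (meanK_pos_s10 hpos hconv ha1 one_pos)))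
  filter_upwards [eventually_ge_atTop 1] with x hx
  have := meanK_mul_log_le_log_psum_sub hpos hconv ha1 one_pos hx
  rw [log_one, sub_zero] at this
  linarith

lemma eventually_log_meanK_rpow_le {θ : ℝ} (hθ : θ ∈ Ioo (0 : ℝ) 1) :
    ∀ᶠ t in atTop, log (meanK a (t ^ θ)) ≤ log (log (psum a t)) := by
  filter_upwards [eventually_gt_atTop 1,
    (tendsto_rpow_atTop hθ.1).eventually
      ((tendsto_log_psum_atTop hpos hconv ha1).eventually_ge_atTop 0),
    tendsto_log_atTop.eventually_ge_atTop (1 - θ)⁻¹] with t ht hF hlog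
  have ht0 : 0 < t := by linarith
  have hm := meanK_pos_s10 hpos hconv ha1 (rpow_pos_of_pos ht0 θ)
  have hgrowth := meanK_mul_log_le_log_psum_sub hpos hconv ha1 (rpow_pos_of_pos ht0 θ)
    (rpow_le_self_of_one_le ht.le hθ.2.le)
  rw [log_rpow ht0] at hgrowth
  have hlog' : 1 ≤ (1 - θ) * log t := by
    rw [inv_le_iff_one_le_mul₀ (sub_pos.2 hθ.2)] at hlog
    linarith
  refine log_le_log hm ?_
  nlinarith [mul_le_mul_of_nonneg_left hlog' hm.le]

lemma eventually_log_log_psum_le_s10 :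
    ∀ᶠ t in atTop, log (log (psum a t)) ≤ log (meanK a t) + log (2 * log t) := by
  have hm1 := meanK_pos_s10 hpos hconv ha1 one_pos
  filter_upwards [eventually_gt_atTop 1,
    (tendsto_log_psum_atTop hpos hconv ha1).eventually_gt_atTop 0,
    tendsto_log_atTop.eventually_ge_atTop (log (psum a 1) / meanK a 1)] with t ht hF hlog
  have hlogt := log_pos ht
  have hmt := meanK_monotoneOn hpos hconv ha1 (mem_Ioi.2 one_pos) (zero_lt_one.trans ht) ht.le
  have hgrowth := log_psum_sub_le_meanK_mul_log hpos hconv ha1 one_pos ht.le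
  rw [log_one, sub_zero] at hgrowth
  rw [div_le_iff₀ hm1] at hlog
  rw [← log_mul (meanK_pos_s10 hpos hconv ha1 (zero_lt_one.trans ht)).ne' (by positivity)]
  refine log_le_log hF ?_
  nlinarith [mul_le_mul_of_nonneg_right hmt hlogt.le]

end PowerSeries

theorem statement10_general (a : ℕ → ℝ)
    (hpos : ∀ n, 0 ≤ a n) (ha1 : ∃ n, 1 ≤ n ∧ 0 < a n)
    (hconv : ∀ t : ℝ, Summable fun n : ℕ => a n * t ^ n) :
    Filter.liminf (fun t : ℝ => ((varK a t / meanK a t : ℝ) : EReal)) atTop ≤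
        Filter.liminf (fun t : ℝ => ((Real.log (meanK a t) / Real.log t : ℝ) : EReal)) atTop ∧
    Filter.liminf (fun t : ℝ => ((Real.log (meanK a t) / Real.log t : ℝ) : EReal)) atTop ≤
        Filter.liminf
          (fun t : ℝ => ((Real.log (Real.log (psum a t)) / Real.log t : ℝ) : EReal)) atTop ∧
    Filter.liminf
        (fun t : ℝ => ((Real.log (Real.log (psum a t)) / Real.log t : ℝ) : EReal)) atTop ≤
      Filter.limsup
        (fun t : ℝ => ((Real.log (Real.log (psum a t)) / Real.log t : ℝ) : EReal)) atTop ∧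
    Filter.limsup
        (fun t : ℝ => ((Real.log (Real.log (psum a t)) / Real.log t : ℝ) : EReal)) atTop =
      Filter.limsup (fun t : ℝ => ((Real.log (meanK a t) / Real.log t : ℝ) : EReal)) atTop ∧
    Filter.limsup (fun t : ℝ => ((Real.log (meanK a t) / Real.log t : ℝ) : EReal)) atTop ≤
      Filter.limsup (fun t : ℝ => ((varK a t / meanK a t : ℝ) : EReal)) atTop := by
  have hlogm : ∀ t > 0, HasDerivAt (fun t => log (meanK a t)) (varK a t / meanK a t / t) t :=
    fun t ht => hasDerivAt_log_meanK hpos hconv ha1 ht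
  have hrpow := fun θ (hθ : θ ∈ Ioo (0 : ℝ) 1) => eventually_log_meanK_rpow_le hpos hconv ha1 hθ
  exact ⟨liminf_le_liminfDivLog hlogm, liminfDivLog_le_of_rpow_le hrpow,
    liminf_le_limsup (by isBoundedDefault) (by isBoundedDefault),
    le_antisymm (limsupDivLog_le_of_le_add tendsto_log_two_mul_log_div_log
      (eventually_log_log_psum_le_s10 hpos hconv ha1)) (limsupDivLog_le_of_rpow_le hrpow),
    limsupDivLog_le_limsup hlogm⟩

/-- Proposition 2.5.3. For `f ∈ K` entire, with all limits as `t → ∞`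
taken in `EReal`:
`liminf σ_f²/m_f ≤ liminf (log m_f)/(log t) ≤ liminf (log log f)/(log t)
 ≤ limsup (log log f)/(log t) = limsup (log m_f)/(log t) = ρ(f) ≤ limsup σ_f²/m_f`. -/
theorem statement10 (a : ℕ → ℝ)
    (hpos : ∀ n, 0 ≤ a n) (ha0 : 0 < a 0) (ha1 : ∃ n, 1 ≤ n ∧ 0 < a n)
    (hconv : ∀ t : ℝ, Summable fun n : ℕ => a n * t ^ n) :
    Filter.liminf (fun t : ℝ => ((varK a t / meanK a t : ℝ) : EReal)) atTop ≤
        Filter.liminf (fun t : ℝ => ((Real.log (meanK a t) / Real.log t : ℝ) : EReal)) atTop ∧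
    Filter.liminf (fun t : ℝ => ((Real.log (meanK a t) / Real.log t : ℝ) : EReal)) atTop ≤
        Filter.liminf
          (fun t : ℝ => ((Real.log (Real.log (psum a t)) / Real.log t : ℝ) : EReal)) atTop ∧
    Filter.liminf
        (fun t : ℝ => ((Real.log (Real.log (psum a t)) / Real.log t : ℝ) : EReal)) atTop ≤
      Filter.limsup
        (fun t : ℝ => ((Real.log (Real.log (psum a t)) / Real.log t : ℝ) : EReal)) atTop ∧
    Filter.limsup
        (fun t : ℝ => ((Real.log (Real.log (psum a t)) / Real.log t : ℝ) : EReal)) atTop =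
      Filter.limsup (fun t : ℝ => ((Real.log (meanK a t) / Real.log t : ℝ) : EReal)) atTop ∧
    Filter.limsup (fun t : ℝ => ((Real.log (meanK a t) / Real.log t : ℝ) : EReal)) atTop ≤
      Filter.limsup (fun t : ℝ => ((varK a t / meanK a t : ℝ) : EReal)) atTop :=
  statement10_general a hpos ha1 hconv
end
end

section
/- Let (b_j)_{j≥1} be an increasing sequence of positive real numbers with ∑_{j≥1} 1/b_j < ∞, and let f(z) = a·∏_{j≥1}(1 + z/b_j) with a > 0, an entire function in the class K whose Khinchin family has mean m_f(t) = ∑_{j≥1} t/(t + b_j) and variance σ_f²(t) = ∑_{j≥1} t b_j/(t + b_j)² for t ≥ 0. Then f is a clan: lim_{t→∞} σ_f(t)/m_f(t) = 0. -/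
open Filter Topology MeasureTheory
open scoped ENNReal NNReal Classical

noncomputable section

/-- Proposition 2.5.7. Every canonical product
`f(z) = a·∏_{j≥1}(1 + z/b_j)` of genus 0 with negative zeros `-b_j` (where `(b_j)` is an
increasing sequence of positive reals with `∑ 1/b_j < ∞`) is a clan: its Khinchin family
has mean `m_f(t) = ∑_j t/(t+b_j)` and variance `σ_f²(t) = ∑_j t·b_j/(t+b_j)²`, and
`σ_f(t)/m_f(t) → 0` as `t → ∞`. -/
theorem statement11 (b : ℕ → ℝ) (hbpos : ∀ j, 0 < b j) (hbmono : StrictMono b)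
    (hbsum : Summable fun j : ℕ => 1 / b j) :
    Tendsto
      (fun t : ℝ =>
        Real.sqrt (∑' j : ℕ, t * b j / (t + b j) ^ 2) / ∑' j : ℕ, t / (t + b j))
      atTop (𝓝 0) := by

  -- Notation
  set S : ℝ → ℝ := fun t => ∑' j : ℕ, t / (t + b j) with hSdef
  set V : ℝ → ℝ := fun t => ∑' j : ℕ, t * b j / (t + b j) ^ 2 with hVdef
  have hden : ∀ (t : ℝ), 0 < t → ∀ j, 0 < t + b j := fun t ht j => by
    have := hbpos j; linarith
  have hsumS : ∀ (t : ℝ), 0 < t → Summable (fun j : ℕ => t / (t + b j)) := by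
    intro t ht
    refine Summable.of_nonneg_of_le (fun j => div_nonneg ht.le (hden t ht j).le)
      (fun j => ?_) (hbsum.mul_left t)
    have h1 : (0:ℝ) < b j := hbpos j
    rw [mul_one_div]
    exact div_le_div_of_nonneg_left ht.le (hbpos j) (by linarith)
  -- termwise bound V ≤ S
  have hVS : ∀ (t : ℝ), 0 < t → V t ≤ S t := by
    intro t ht
    refine Summable.tsum_le_tsum (fun j => ?_) ?_ (hsumS t ht)
    · have hb := hbpos j
      have hd := hden t ht j
      rw [div_le_div_iff₀ (by positivity) hd]
      ring_nf
      nlinarith [sq_nonneg (t + b j)]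
    · refine Summable.of_nonneg_of_le
        (fun j => div_nonneg (by have := hbpos j; positivity) (by positivity))
        (fun j => ?_) (hsumS t ht)
      have hb := hbpos j
      have hd := hden t ht j
      rw [div_le_div_iff₀ (by positivity) hd]
      nlinarith [mul_pos ht hd]
  have hVnonneg : ∀ t : ℝ, 0 < t → 0 ≤ V t :=
    fun t ht => tsum_nonneg (fun j =>
      div_nonneg (by have := hbpos j; positivity) (by positivity))
  -- S tends to atTop
  have hS : Tendsto S atTop atTop := by
    rw [tendsto_atTop]
    intro C
    set N : ℕ := ⌈2 * C⌉₊ with hN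
    have hCN : 2 * C ≤ (N : ℝ) := Nat.le_ceil _
    filter_upwards [eventually_ge_atTop (b N), eventually_gt_atTop (0:ℝ)] with t htb ht
    have hterm : ∀ j ∈ Finset.range N, (1:ℝ)/2 ≤ t / (t + b j) := by
      intro j hj
      have hj' : j ≤ N := (Finset.mem_range.mp hj).le
      have hbj : b j ≤ b N := hbmono.monotone hj'
      have hb := hbpos j
      rw [div_le_div_iff₀ (by norm_num) (hden t ht j)]
      linarith
    calc C ≤ (N : ℝ) / 2 := by linarith
      _ ≤ ∑ j ∈ Finset.range N, t / (t + b j) := by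
          have := Finset.sum_le_sum hterm
          simpa [Finset.sum_const, div_eq_mul_inv, mul_comm] using this
      _ ≤ S t := Summable.sum_le_tsum _ (fun j _ => by have := hden t ht j; positivity) (hsumS t ht)
  -- 1/sqrt(S) → 0
  have hsq : Tendsto Real.sqrt atTop atTop := by
    rw [tendsto_atTop_atTop]
    intro C
    refine ⟨max 0 C ^ 2, fun x hx => (le_max_right 0 C).trans ?_⟩
    rw [← Real.sqrt_sq (le_max_left 0 C)]
    exact Real.sqrt_le_sqrt hx
  have hg : Tendsto (fun t => 1 / Real.sqrt (S t)) atTop (𝓝 0) := by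
    simp only [one_div]
    exact (hsq.comp hS).inv_tendsto_atTop
  refine squeeze_zero' ?_ ?_ hg
  · filter_upwards [eventually_gt_atTop (0:ℝ)] with t ht
    exact div_nonneg (Real.sqrt_nonneg _) (tsum_nonneg fun j => by
      have := hden t ht j; positivity)
  · filter_upwards [eventually_gt_atTop (0:ℝ), hS.eventually_gt_atTop 0] with t ht hSt
    have h1 : Real.sqrt (V t) ≤ Real.sqrt (S t) := Real.sqrt_le_sqrt (hVS t ht)
    calc Real.sqrt (V t) / S t ≤ Real.sqrt (S t) / S t := by
          exact div_le_div_of_nonneg_right h1 hSt.le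
      _ = 1 / Real.sqrt (S t) := Real.sqrt_div_self'
end
end

section
/- (Hayman's local central limit theorem) Let f(z) = ∑_{n≥0} a_n z^n be a strongly Gaussian power series in the class K with radius of convergence R > 0. Then lim_{t↑R} sup_{n∈ℤ} | (a_n t^n / f(t)) · √(2π) · σ_f(t) − e^{−(m_f(t)−n)²/(2σ_f²(t))} | = 0, where a_n = 0 for integers n < 0. -/
open Filter Topology MeasureTheory
open scoped ENNReal NNReal Classical

noncomputable section

/-- The characteristic function `E(e^{iθ X̌_t})` of the normalized Khinchin variable:
`(f(t e^{iθ/σ_f(t)})/f(t)) · e^{-iθ m_f(t)/σ_f(t)}`. -/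
def charN (a : ℕ → ℝ) (t θ : ℝ) : ℂ :=
  Fc a ((t : ℂ) * Complex.exp (Complex.I * ((θ / sdK a t : ℝ) : ℂ))) / Fc a (t : ℂ) *
    Complex.exp (-Complex.I * ((θ * meanK a t / sdK a t : ℝ) : ℂ))

/-- `f` is strongly Gaussian: `σ_f(t) → ∞` and
`∫_{|θ|≤πσ_f(t)} |E(e^{iθX̌_t}) - e^{-θ²/2}| dθ → 0` as `t ↑ R`. -/
def StronglyGaussian (a : ℕ → ℝ) (R : ℝ≥0∞) : Prop :=
  Tendsto (sdK a) (nhdsUpto R) atTop ∧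
    Tendsto (fun t => ∫ θ in (-(Real.pi * sdK a t))..(Real.pi * sdK a t),
        ‖charN a t θ - ((Real.exp (-θ ^ 2 / 2) : ℝ) : ℂ)‖) (nhdsUpto R) (𝓝 0)

/-! The term `aₙtⁿ` is the `n`-th Fourier coefficient of `θ ↦ f(te^{iθ})`. Substituting
`θ = u/σ_f(t)` writes `aₙtⁿ/f(t) · 2πσ_f(t)` as the integral over `[-πσ_f(t), πσ_f(t)]` of
`E(e^{iuX̌_t}) e^{-iux}` with `x = (n - m_f(t))/σ_f(t)`, while `√(2π) e^{-x²/2}` is the integral of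
`e^{-u²/2} e^{-iux}` over `ℝ`. Their difference is bounded, uniformly in `n`, by the integral in
the definition of strongly Gaussian plus the Gaussian mass outside `[-πσ_f(t), πσ_f(t)]`, and both
tend to `0` as `σ_f(t) → ∞`. -/

open Real
open Complex (I)
open scoped Complex

theorem norm_mul_cexp_mul_mul_I (c : ℂ) (x θ : ℝ) : ‖c * cexp (x * θ * I)‖ = ‖c‖ := by
  rw [norm_mul, ← Complex.ofReal_mul, Complex.norm_exp_ofReal_mul_I, mul_one]

theorem integral_exp_int_mul_I (k : ℤ) :
    ∫ θ in -π..π, cexp (k * θ * I) = if k = 0 then ((2 * π : ℝ) : ℂ) else 0 := by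
  split_ifs with hk
  · simp [hk, two_mul]
  · have hkI : (k : ℂ) * I ≠ 0 := by simp [hk, Complex.I_ne_zero]
    have hper : cexp (k * I * π) = cexp (k * I * (-π : ℝ)) := by
      rw [← mul_one (cexp (k * I * (-π : ℝ))), ← Complex.exp_int_mul_two_pi_mul_I k,
        ← Complex.exp_add]
      push_cast
      ring_nf
    simp_rw [mul_right_comm _ _ I]
    rw [integral_exp_mul_complex hkI, hper, sub_self, zero_div]

theorem intervalIntegral_tsum_mul_exp_mul_exp_neg {c : ℕ → ℂ} (hc : Summable (‖c ·‖)) (n : ℤ) :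
    ∫ θ in -π..π, (∑' k, c k * cexp (k * θ * I)) * cexp (-(n * θ * I))
      = ((2 * π : ℝ) : ℂ) * if 0 ≤ n then c n.toNat else 0 := by
  have hterm (k : ℕ) (θ : ℝ) :
      c k * cexp (k * θ * I) * cexp (-(n * θ * I)) = c k * cexp (((k - n : ℤ) : ℂ) * θ * I) := by
    rw [mul_assoc, ← Complex.exp_add]
    push_cast
    ring_nf
  have hnorm (k : ℕ) (θ : ℝ) : ‖c k * cexp (((k - n : ℤ) : ℂ) * θ * I)‖ = ‖c k‖ := by
    simpa using norm_mul_cexp_mul_mul_I (c k) (k - n : ℤ) θ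
  have hk (θ : ℝ) : Summable fun k : ℕ => c k * cexp (k * θ * I) :=
    hc.of_norm_bounded fun k => by simpa using (norm_mul_cexp_mul_mul_I (c k) k θ).le
  have hsum : HasSum (fun k : ℕ => ∫ θ in -π..π, c k * cexp (((k - n : ℤ) : ℂ) * θ * I))
      (∫ θ in -π..π, (∑' k, c k * cexp (k * θ * I)) * cexp (-(n * θ * I))) :=
    intervalIntegral.hasSum_integral_of_dominated_convergence (fun k _ => ‖c k‖)
      (fun k => (by fun_prop : Continuous _).aestronglyMeasurable)
      (fun k => ae_of_all _ fun θ _ => (hnorm k θ).le) (ae_of_all _ fun _ _ => hc)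
      intervalIntegrable_const
      (ae_of_all _ fun θ _ => by
        simpa only [hterm] using (hk θ).hasSum.mul_right (cexp (-(n * θ * I))))
  simp_rw [intervalIntegral.integral_const_mul, integral_exp_int_mul_I, sub_eq_zero] at hsum
  rw [← hsum.tsum_eq]
  split_ifs with hn
  · rw [tsum_eq_single n.toNat fun k hk => by rw [if_neg (by omega), mul_zero],
      if_pos (by omega), mul_comm]
  · simp only [show ∀ k : ℕ, (k : ℤ) ≠ n by omega, if_false, mul_zero, tsum_zero]

theorem continuous_tsum_mul_exp {c : ℕ → ℂ} (hc : Summable (‖c ·‖)) :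
    Continuous fun θ : ℝ => ∑' k, c k * cexp (k * θ * I) :=
  continuous_tsum (fun k => by fun_prop) hc fun k θ => by
    simpa using (norm_mul_cexp_mul_mul_I (c k) k θ).le

theorem summable_norm_ofReal_mul_pow {a : ℕ → ℝ} {t : ℝ} (hsum : Summable fun n => a n * t ^ n) :
    Summable fun n => ‖((a n * t ^ n : ℝ) : ℂ)‖ := by
  simpa only [Complex.norm_real] using summable_norm_iff.mpr hsum

theorem Fc_mul_exp (a : ℕ → ℝ) (t θ : ℝ) :
    Fc a (t * cexp (I * θ)) = ∑' k, ((a k * t ^ k : ℝ) : ℂ) * cexp (k * θ * I) := by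
  refine tsum_congr fun k => ?_
  rw [mul_pow, ← Complex.exp_nat_mul]
  push_cast
  ring_nf

theorem charN_eq_tsum (a : ℕ → ℝ) (t u : ℝ) :
    charN a t u = (∑' k, ((a k * t ^ k : ℝ) : ℂ) * cexp (k * (u / sdK a t : ℝ) * I)) / psum a t *
      cexp (-(u * (meanK a t / sdK a t : ℝ) * I)) := by
  have hF : Fc a t = psum a t := by
    rw [Fc, psum, Complex.ofReal_tsum]
    exact tsum_congr fun k => by push_cast; rfl
  rw [charN, hF, ← Fc_mul_exp]
  push_cast
  ring_nf

theorem continuous_charN {a : ℕ → ℝ} {t : ℝ} (hsum : Summable fun n => a n * t ^ n) :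
    Continuous (charN a t) := by
  simp_rw [funext (charN_eq_tsum a t)]
  exact (((continuous_tsum_mul_exp (summable_norm_ofReal_mul_pow hsum)).comp
    (continuous_id.div_const _)).div_const _).mul (by fun_prop)

theorem intervalIntegral_charN_mul_exp {a : ℕ → ℝ} {t : ℝ} (hsum : Summable fun n => a n * t ^ n)
    (hσ : 0 < sdK a t) (n : ℤ) :
    ∫ u in -(π * sdK a t)..π * sdK a t,
        charN a t u * cexp (-(u * ((n - meanK a t) / sdK a t : ℝ) * I))
      = ((2 * π * sdK a t * (if 0 ≤ n then a n.toNat * t ^ n.toNat else 0) / psum a t : ℝ)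
          : ℂ) := by
  have hσ0 := hσ.ne'
  set g : ℝ → ℂ := fun θ =>
    (∑' k, ((a k * t ^ k : ℝ) : ℂ) * cexp (k * θ * I)) * cexp (-(n * θ * I))
  have hg (u : ℝ) : charN a t u * cexp (-(u * ((n - meanK a t) / sdK a t : ℝ) * I))
      = (psum a t : ℂ)⁻¹ * g (u / sdK a t) := by
    rw [charN_eq_tsum, div_eq_inv_mul, mul_assoc, mul_assoc, ← Complex.exp_add]
    congr 3
    push_cast
    field_simp
    ring
  simp_rw [hg, intervalIntegral.integral_const_mul]
  rw [intervalIntegral.integral_comp_div g hσ0, neg_div, mul_div_cancel_right₀ _ hσ0,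
    intervalIntegral_tsum_mul_exp_mul_exp_neg (summable_norm_ofReal_mul_pow hsum),
    Complex.real_smul]
  split_ifs <;> push_cast <;> ring

theorem integrable_exp_neg_sq_div_two : Integrable fun u : ℝ => Real.exp (-u ^ 2 / 2) := by
  convert integrable_exp_neg_mul_sq (b := (2 : ℝ)⁻¹) (by norm_num) using 3 with u
  ring

theorem integral_exp_neg_sq_div_two : ∫ u : ℝ, Real.exp (-u ^ 2 / 2) = √(2 * π) := by
  convert integral_gaussian (2 : ℝ)⁻¹ using 4 with u
  · ring
  · rw [div_inv_eq_mul, mul_comm]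

theorem integral_exp_neg_sq_div_two_mul_exp (x : ℝ) :
    ∫ u : ℝ, (Real.exp (-u ^ 2 / 2) : ℂ) * cexp (-(u * x * I))
      = √(2 * π) * Real.exp (-x ^ 2 / 2) := by
  have h := fourierIntegral_gaussian (b := 2⁻¹) (by norm_num) (-x)
  have h2 : ((π : ℂ) / 2⁻¹) ^ (1 / 2 : ℂ) = (√(2 * π) : ℝ) := by
    rw [Real.sqrt_eq_rpow, Complex.ofReal_cpow (by positivity)]
    push_cast
    ring_nf
  rw [h2] at h
  convert h using 2
  · ext u
    rw [Complex.ofReal_exp, mul_comm]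
    push_cast
    ring_nf
  · push_cast
    ring_nf

theorem norm_integral_sub_intervalIntegral_le {E : Type*} [NormedAddCommGroup E]
    [NormedSpace ℝ E] {f : ℝ → E} (hf : Integrable f) {a b : ℝ} (hab : a ≤ b) :
    ‖(∫ u, f u) - ∫ u in a..b, f u‖ ≤ (∫ u, ‖f u‖) - ∫ u in a..b, ‖f u‖ := by
  rw [intervalIntegral.integral_of_le hab, intervalIntegral.integral_of_le hab,
    ← integral_add_compl measurableSet_Ioc hf, ← integral_add_compl measurableSet_Ioc hf.norm,
    add_sub_cancel_left, add_sub_cancel_left]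
  exact norm_integral_le_integral_norm _

theorem abs_term_mul_sdK_sub_exp_le {a : ℕ → ℝ} {t : ℝ} (hsum : Summable fun n => a n * t ^ n)
    (hσ : 0 < sdK a t) (n : ℤ) :
    |(if 0 ≤ n then a n.toNat * t ^ n.toNat else 0) / psum a t * √(2 * π) * sdK a t -
        Real.exp (-(meanK a t - n) ^ 2 / (2 * varK a t))|
      ≤ (√(2 * π))⁻¹ *
        ((∫ θ in -(π * sdK a t)..π * sdK a t, ‖charN a t θ - (Real.exp (-θ ^ 2 / 2) : ℂ)‖) +
          (√(2 * π) - ∫ θ in -(π * sdK a t)..π * sdK a t, Real.exp (-θ ^ 2 / 2))) := by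
  set σ := sdK a t
  set c := if 0 ≤ n then a n.toNat * t ^ n.toNat else 0
  set x := (n - meanK a t) / σ
  set e : ℝ → ℂ := fun u => cexp (-(u * x * I))
  set G : ℝ → ℂ := fun u => (Real.exp (-u ^ 2 / 2) : ℂ)
  have hπσ : -(π * σ) ≤ π * σ := by nlinarith [pi_pos]
  have hs : 0 < √(2 * π) := by positivity
  have hvar : varK a t = σ ^ 2 := (Real.sq_sqrt (Real.sqrt_pos.mp hσ).le).symm
  have he (u : ℝ) : ‖e u‖ = 1 := by
    simp only [e, ← neg_mul, ← Complex.ofReal_mul, ← Complex.ofReal_neg,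
      Complex.norm_exp_ofReal_mul_I]
  have hGe (u : ℝ) : ‖G u * e u‖ = Real.exp (-u ^ 2 / 2) := by
    rw [norm_mul, he, mul_one, Complex.norm_real, Real.norm_of_nonneg (Real.exp_pos _).le]
  have hGe_int : Integrable fun u => G u * e u :=
    integrable_exp_neg_sq_div_two.mono' (by fun_prop : Continuous _).aestronglyMeasurable
      (ae_of_all _ fun u => (hGe u).le)
  have hD : (((c / psum a t * √(2 * π) * σ - Real.exp (-x ^ 2 / 2)) * √(2 * π) : ℝ) : ℂ)
      = (∫ u in -(π * σ)..π * σ, charN a t u * e u) - ∫ u, G u * e u := by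
    rw [intervalIntegral_charN_mul_exp hsum hσ, integral_exp_neg_sq_div_two_mul_exp,
      ← Complex.ofReal_mul, ← Complex.ofReal_sub]
    congr 1
    linear_combination (c / psum a t * σ) * Real.mul_self_sqrt (by positivity : 0 ≤ 2 * π)
  have hexp : Real.exp (-(meanK a t - n) ^ 2 / (2 * varK a t)) = Real.exp (-x ^ 2 / 2) := by
    rw [hvar]
    congr 1
    simp only [x]
    field_simp
    ring
  rw [hexp]
  calc _ = (√(2 * π))⁻¹ * ‖(∫ u in -(π * σ)..π * σ, (charN a t u - G u) * e u)
          - ((∫ u, G u * e u) - ∫ u in -(π * σ)..π * σ, G u * e u)‖ := by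
        have hcharN_int : IntervalIntegrable (fun u => charN a t u * e u) volume
            (-(π * σ)) (π * σ) :=
          ((continuous_charN hsum).mul (by fun_prop)).intervalIntegrable _ _
        simp_rw [sub_mul]
        rw [intervalIntegral.integral_sub hcharN_int hGe_int.intervalIntegrable,
          sub_sub_sub_cancel_right, ← hD, Complex.norm_real, Real.norm_eq_abs, abs_mul,
          abs_of_pos hs]
        field_simp
    _ ≤ _ := by
      gcongr
      refine (norm_sub_le _ _).trans (add_le_add ?_ ?_)
      · refine (intervalIntegral.norm_integral_le_integral_norm hπσ).trans_eq ?_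
        simp_rw [norm_mul, he, mul_one, G]
      · simpa only [hGe, integral_exp_neg_sq_div_two] using
          norm_integral_sub_intervalIntegral_le hGe_int hπσ

theorem tendsto_sqrt_two_pi_sub_intervalIntegral_exp_neg_sq_div_two {ι : Type*} {l : Filter ι}
    {A : ι → ℝ} (hA : Tendsto A l atTop) :
    Tendsto (fun i => √(2 * π) - ∫ θ in -A i..A i, Real.exp (-θ ^ 2 / 2)) l (𝓝 0) := by
  have h : Tendsto (fun s => ∫ θ in -s..s, Real.exp (-θ ^ 2 / 2)) atTop (𝓝 √(2 * π)) :=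
    integral_exp_neg_sq_div_two ▸ intervalIntegral_tendsto_integral integrable_exp_neg_sq_div_two
      tendsto_neg_atTop_atBot tendsto_id
  simpa only [sub_self, Function.comp_def] using (h.comp hA).const_sub √(2 * π)

theorem eventually_pos_and_ofReal_lt_nhdsUpto {R : ℝ≥0∞} (hR : 0 < R) :
    ∀ᶠ t in nhdsUpto R, 0 < t ∧ ENNReal.ofReal t < R := by
  rw [nhdsUpto]
  split_ifs with htop
  · filter_upwards [eventually_gt_atTop 0] with t ht
    exact ⟨ht, htop ▸ ENNReal.ofReal_lt_top⟩
  · have hR' : 0 < R.toReal := ENNReal.toReal_pos hR.ne' htop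
    filter_upwards [Ioo_mem_nhdsLT hR'] with t ht
    exact ⟨ht.1, (ENNReal.ofReal_lt_iff_lt_toReal ht.1.le htop).mpr ht.2⟩

theorem statement12_general (a : ℕ → ℝ) (R : ℝ≥0∞) (hR : 0 < R)
    (hconv : ∀ t : ℝ, 0 ≤ t → ENNReal.ofReal t < R → Summable fun n => a n * t ^ n)
    (hSG : StronglyGaussian a R) :
    Tendsto
      (fun t : ℝ =>
        ⨆ n : ℤ,
          |(if 0 ≤ n then a n.toNat * t ^ n.toNat else 0) / psum a t *
                Real.sqrt (2 * Real.pi) * sdK a t -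
              Real.exp (-(meanK a t - (n : ℝ)) ^ 2 / (2 * varK a t))|)
      (nhdsUpto R) (𝓝 0) := by
  obtain ⟨hσ, hchar⟩ := hSG
  have htail := tendsto_sqrt_two_pi_sub_intervalIntegral_exp_neg_sq_div_two
    (hσ.const_mul_atTop pi_pos)
  have hbound := (hchar.add htail).const_mul (√(2 * π))⁻¹
  rw [add_zero, mul_zero] at hbound
  refine squeeze_zero' (Eventually.of_forall fun t => Real.iSup_nonneg fun n => abs_nonneg _) ?_
    hbound
  filter_upwards [eventually_pos_and_ofReal_lt_nhdsUpto hR, hσ.eventually_gt_atTop 0]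
    with t ⟨ht, htR⟩ hσt
  have h := abs_term_mul_sdK_sub_exp_le (hconv t ht.le htR) hσt
  exact Real.iSup_le h ((abs_nonneg _).trans (h 0))

/-- Hayman's local central limit theorem, Theorem 3.2.3. If `f ∈ K` with
radius of convergence `R > 0` is strongly Gaussian, then
`lim_{t↑R} sup_{n∈ℤ} | (aₙ tⁿ/f(t))·√(2π)·σ_f(t) − e^{−(m_f(t)−n)²/(2σ_f²(t))} | = 0`,
where `aₙ = 0` for `n < 0`. -/
theorem statement12 (a : ℕ → ℝ) (R : ℝ≥0∞) (hR : 0 < R)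
    (hpos : ∀ n, 0 ≤ a n) (ha0 : 0 < a 0) (ha1 : ∃ n, 1 ≤ n ∧ 0 < a n)
    (hconv : ∀ t : ℝ, 0 ≤ t → ENNReal.ofReal t < R → Summable fun n => a n * t ^ n)
    (hdiv : ∀ t : ℝ, R < ENNReal.ofReal t → ¬ Summable fun n => a n * t ^ n)
    (hSG : StronglyGaussian a R) :
    Tendsto
      (fun t : ℝ =>
        ⨆ n : ℤ,
          |(if 0 ≤ n then a n.toNat * t ^ n.toNat else 0) / psum a t *
                Real.sqrt (2 * Real.pi) * sdK a t -
              Real.exp (-(meanK a t - (n : ℝ)) ^ 2 / (2 * varK a t))|)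
      (nhdsUpto R) (𝓝 0) :=
  statement12_general a R hR hconv hSG
end
end

section
/- (Hayman's asymptotic formula) Let f(z) = ∑_{n≥0} a_n z^n be a strongly Gaussian power series in the class K with radius of convergence R > 0. Then M_f = lim_{t↑R} m_f(t) = +∞, so for each n ≥ 1 there is a unique t_n ∈ (0,R) with m_f(t_n) = n, and a_n ~ (1/√(2π)) · f(t_n)/(σ_f(t_n) · t_n^n) as n → ∞. -/
open Filter Topology MeasureTheory
open scoped ENNReal NNReal Classical

noncomputable section

/-!
Write `f(t e^{iθ}) = ∑ aₙ tⁿ e^{inθ}`. Cauchy's formula for the coefficients and the substitution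
`θ = u / σ_f(t)` give
`2π σ_f(t) aₙ tⁿ / f(t) = ∫_{|u| ≤ π σ_f(t)} E(e^{iuX̌_t}) e^{iu(m_f(t) - n)/σ_f(t)} du`,
and replacing the characteristic function by `e^{-u²/2}` costs at most the error integral of the
strongly Gaussian condition. For arbitrary `n` this bounds `aₙ tⁿ / f(t)` by a quantity that tends
to `0` as `t ↑ R`, uniformly in `n`; together with Markov's inequality
`∑_{n ≥ N} aₙ tⁿ ≤ m_f(t) f(t) / N` it forces `m_f(t) → ∞`. As `m_f' = σ_f² / t > 0`, the
points `t_n` exist, are unique, and tend to `R`. At `t = t_n` the phase is `1`, and the Gaussian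
integral over `|u| ≤ π σ_f(t_n)` tends to `√(2π)`: this is Hayman's formula.
-/

namespace Hayman

open scoped Real

section PowerSeries

variable {b : ℕ → ℝ} {s t : ℝ}

theorem summable_pow_mul_mul_pow_of_lt (hb : ∀ n, 0 ≤ b n) (hs : Summable fun n => b n * s ^ n)
    (ht : 0 ≤ t) (hts : t < s) (p : ℕ) : Summable fun n : ℕ => (n : ℝ) ^ p * b n * t ^ n := by
  have hs0 : 0 < s := ht.trans_lt hts
  obtain ⟨C, hC⟩ : ∃ C, ∀ n, b n * s ^ n ≤ C :=
    ⟨_, fun n => hs.le_tsum n fun m _ => mul_nonneg (hb m) (by positivity)⟩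
  have hr : ‖t / s‖ < 1 := by
    rw [Real.norm_of_nonneg (by positivity), div_lt_one hs0]; exact hts
  refine ((summable_pow_mul_geometric_of_norm_lt_one p hr).mul_left C).of_nonneg_of_le
    (fun n => by have := hb n; positivity) fun n => ?_
  calc (n : ℝ) ^ p * b n * t ^ n = (b n * s ^ n) * ((n : ℝ) ^ p * (t / s) ^ n) := by
        rw [div_pow]; field_simp
    _ ≤ C * ((n : ℝ) ^ p * (t / s) ^ n) := by gcongr; exact hC n

theorem continuousOn_tsum_mul_pow (hb : ∀ n, 0 ≤ b n) (hs : Summable fun n => b n * s ^ n) :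
    ContinuousOn (fun x => ∑' n, b n * x ^ n) (Set.Icc 0 s) := by
  refine continuousOn_tsum (fun n => (continuous_const.mul (continuous_pow n)).continuousOn) hs
    fun n x hx => ?_
  rw [Real.norm_of_nonneg (mul_nonneg (hb n) (pow_nonneg hx.1 n))]
  gcongr
  exacts [hb n, hx.1, hx.2]

theorem hasDerivAt_tsum_mul_pow (hb : ∀ n, 0 ≤ b n) (hs : Summable fun n => b n * s ^ n)
    (ht : 0 < t) (hts : t < s) :
    HasDerivAt (fun x => ∑' n, b n * x ^ n) ((∑' n : ℕ, (n : ℝ) * b n * t ^ n) / t) t := by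
  obtain ⟨r, htr, hr⟩ := exists_between hts
  have hr0 : 0 < r := ht.trans htr
  have hmem : t ∈ Set.Ioo (-r) r := ⟨by linarith, htr⟩
  have hsum' : Summable fun n : ℕ => (n : ℝ) * b n * r ^ (n - 1) := by
    refine ((summable_pow_mul_mul_pow_of_lt hb hs (by linarith) hr 1).div_const r).congr
      fun n => ?_
    rcases n with _ | n
    · simp
    · rw [Nat.add_sub_cancel]; field_simp; ring
  have key := hasDerivAt_tsum_of_isPreconnected hsum' isOpen_Ioo
    (convex_Ioo (-r) r).isPreconnected (g := fun n x => b n * x ^ n)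
    (g' := fun n x => b n * ((n : ℝ) * x ^ (n - 1)))
    (fun n y _ => by simpa using (hasDerivAt_pow n y).const_mul (b n))
    (fun n y hy => ?_) hmem
    (hs.of_nonneg_of_le (fun n => mul_nonneg (hb n) (by positivity))
      fun n => by gcongr; exact hb n) hmem
  · refine key.congr_deriv ?_
    rw [← tsum_div_const]
    refine tsum_congr fun n => ?_
    rcases n with _ | n
    · simp
    · rw [Nat.add_sub_cancel, pow_succ]; field_simp
  · have hy' : |y| ≤ r := abs_le.2 ⟨hy.1.le, hy.2.le⟩
    rw [norm_mul, norm_mul, norm_pow, Real.norm_of_nonneg (hb n), Real.norm_natCast,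
      Real.norm_eq_abs]
    have := hb n
    calc b n * ((n : ℝ) * |y| ^ (n - 1)) ≤ b n * ((n : ℝ) * r ^ (n - 1)) := by gcongr
      _ = (n : ℝ) * b n * r ^ (n - 1) := by ring

end PowerSeries

section Parameters

def Ioo0 (R : ℝ≥0∞) : Set ℝ := {t | 0 < t ∧ ENNReal.ofReal t < R}

variable {R : ℝ≥0∞} {s t : ℝ}

theorem Ioo0_top : Ioo0 ⊤ = Set.Ioi 0 := by
  ext t; simp [Ioo0]

theorem Ioo0_of_ne_top (hR : R ≠ ⊤) : Ioo0 R = Set.Ioo 0 R.toReal := by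
  ext t
  exact and_congr_right fun ht => ENNReal.ofReal_lt_iff_lt_toReal ht.le hR

theorem isOpen_Ioo0 : IsOpen (Ioo0 R) := by
  rcases eq_or_ne R ⊤ with rfl | hR
  · rw [Ioo0_top]; exact isOpen_Ioi
  · rw [Ioo0_of_ne_top hR]; exact isOpen_Ioo

theorem convex_Ioo0 : Convex ℝ (Ioo0 R) := by
  rcases eq_or_ne R ⊤ with rfl | hR
  · rw [Ioo0_top]; exact convex_Ioi 0
  · rw [Ioo0_of_ne_top hR]; exact convex_Ioo 0 _

theorem ofReal_lt_of_mem_Ioo0 (hs : s ∈ Ioo0 R) (hts : t ≤ s) : ENNReal.ofReal t < R :=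
  (ENNReal.ofReal_le_ofReal hts).trans_lt hs.2

theorem exists_gt_mem_Ioo0 (ht : t ∈ Ioo0 R) : ∃ s ∈ Ioo0 R, t < s := by
  have h : ∀ᶠ s in 𝓝[>] t, s ∈ Ioo0 R ∧ t < s :=
    Filter.Eventually.and (mem_nhdsWithin_of_mem_nhds (isOpen_Ioo0.mem_nhds ht))
      self_mem_nhdsWithin
  exact h.exists

theorem nhdsUpto_neBot : (nhdsUpto R).NeBot := by
  unfold nhdsUpto
  split_ifs
  · exact atTop_neBot
  · exact nhdsLT_neBot _

theorem eventually_mem_Ioo0 (hR : 0 < R) : ∀ᶠ t in nhdsUpto R, t ∈ Ioo0 R := by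
  unfold nhdsUpto
  split_ifs with hR'
  · rw [hR', Ioo0_top]; exact Ioi_mem_atTop 0
  · rw [Ioo0_of_ne_top hR']; exact Ioo_mem_nhdsLT (ENNReal.toReal_pos hR.ne' hR')

theorem tendsto_nhdsUpto {ι : Type*} {l : Filter ι} {u : ι → ℝ} (hR : 0 < R)
    (hmem : ∀ᶠ x in l, u x ∈ Ioo0 R) (hgt : ∀ c ∈ Ioo0 R, ∀ᶠ x in l, c < u x) :
    Tendsto u l (nhdsUpto R) := by
  unfold nhdsUpto
  split_ifs with hR'
  · subst hR'
    refine tendsto_atTop.2 fun y => (hgt (max y 1) ?_).mono fun x hx => (le_max_left y 1).trans hx.le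
    rw [Ioo0_top]; exact (lt_max_of_lt_right zero_lt_one : (0 : ℝ) < max y 1)
  · rw [Ioo0_of_ne_top hR'] at hmem hgt
    have hR0 : 0 < R.toReal := ENNReal.toReal_pos hR.ne' hR'
    refine tendsto_nhdsWithin_iff.2 ⟨tendsto_order.2 ⟨fun y hy => ?_, fun y hy => ?_⟩,
      hmem.mono fun x hx => hx.2⟩
    · refine (hgt (max y (R.toReal / 2)) ⟨?_, max_lt hy (by linarith)⟩).mono
        fun x hx => (le_max_left _ _).trans_lt hx
      exact lt_max_of_lt_right (by linarith)
    · exact hmem.mono fun x hx => hx.2.trans hy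

end Parameters

section MeanVariance

variable {a : ℕ → ℝ} {R : ℝ≥0∞} {t : ℝ}

theorem psum_pos (hpos : ∀ n, 0 ≤ a n) (ha0 : 0 < a 0) (hs : Summable fun n => a n * t ^ n)
    (ht : 0 ≤ t) : 0 < psum a t :=
  hs.tsum_pos (fun n => mul_nonneg (hpos n) (pow_nonneg ht n)) 0 (by simpa using ha0)

theorem summable_moment (hpos : ∀ n, 0 ≤ a n)
    (hconv : ∀ t : ℝ, 0 ≤ t → ENNReal.ofReal t < R → Summable fun n => a n * t ^ n)
    (ht : t ∈ Ioo0 R) (p : ℕ) : Summable fun n : ℕ => (n : ℝ) ^ p * a n * t ^ n := by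
  obtain ⟨s, hs, hts⟩ := exists_gt_mem_Ioo0 ht
  exact summable_pow_mul_mul_pow_of_lt hpos (hconv s hs.1.le hs.2) ht.1.le hts p

theorem summable_mul_moment (hpos : ∀ n, 0 ≤ a n)
    (hconv : ∀ t : ℝ, 0 ≤ t → ENNReal.ofReal t < R → Summable fun n => a n * t ^ n)
    (ht : t ∈ Ioo0 R) : Summable fun n : ℕ => (n : ℝ) * a n * t ^ n := by
  simpa using summable_moment hpos hconv ht 1

theorem tsum_mul_moment_eq (hf : psum a t ≠ 0) :
    ∑' n : ℕ, (n : ℝ) * a n * t ^ n = meanK a t * psum a t :=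
  (div_mul_cancel₀ _ hf).symm

theorem meanK_zero : meanK a 0 = 0 := by
  have h : ∀ n : ℕ, (n : ℝ) * a n * 0 ^ n = 0 := fun n => by rcases n with _ | n <;> simp
  simp [meanK, h]

theorem meanK_pos (hpos : ∀ n, 0 ≤ a n) (ha0 : 0 < a 0) (ha1 : ∃ n, 1 ≤ n ∧ 0 < a n)
    (hconv : ∀ t : ℝ, 0 ≤ t → ENNReal.ofReal t < R → Summable fun n => a n * t ^ n)
    (ht : t ∈ Ioo0 R) : 0 < meanK a t := by
  obtain ⟨k, hk, hak⟩ := ha1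
  have hk' : (0 : ℝ) < k := by exact_mod_cast hk
  refine div_pos ((summable_mul_moment hpos hconv ht).tsum_pos
    (fun n => by have := hpos n; have := ht.1; positivity) k (by have := ht.1; positivity)) ?_
  exact psum_pos hpos ha0 (hconv t ht.1.le ht.2) ht.1.le

theorem varK_eq_tsum (hpos : ∀ n, 0 ≤ a n) (ha0 : 0 < a 0)
    (hconv : ∀ t : ℝ, 0 ≤ t → ENNReal.ofReal t < R → Summable fun n => a n * t ^ n)
    (ht : t ∈ Ioo0 R) :
    varK a t = (∑' n : ℕ, ((n : ℝ) - meanK a t) ^ 2 * (a n * t ^ n)) / psum a t := by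
  have hf := (psum_pos hpos ha0 (hconv t ht.1.le ht.2) ht.1.le).ne'
  have h0 := hconv t ht.1.le ht.2
  have h1 := summable_mul_moment hpos hconv ht
  have h2 := summable_moment hpos hconv ht 2
  have hS1 := tsum_mul_moment_eq hf
  set m := meanK a t with hm
  have hexpand : ∑' n : ℕ, ((n : ℝ) - m) ^ 2 * (a n * t ^ n) =
      ∑' n : ℕ, (n : ℝ) ^ 2 * a n * t ^ n - 2 * m * (m * psum a t) + m ^ 2 * psum a t := by
    rw [← hS1, psum, ← tsum_mul_left, ← tsum_mul_left, ← h2.tsum_sub (h1.mul_left _),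
      ← (h2.sub (h1.mul_left _)).tsum_add (h0.mul_left _)]
    exact tsum_congr fun n => by ring
  rw [hexpand, varK, ← hm]
  change _ / psum a t - _ = _
  field_simp
  ring

theorem varK_pos (hpos : ∀ n, 0 ≤ a n) (ha0 : 0 < a 0) (ha1 : ∃ n, 1 ≤ n ∧ 0 < a n)
    (hconv : ∀ t : ℝ, 0 ≤ t → ENNReal.ofReal t < R → Summable fun n => a n * t ^ n)
    (ht : t ∈ Ioo0 R) : 0 < varK a t := by
  have hm := meanK_pos hpos ha0 ha1 hconv ht
  have h0 := hconv t ht.1.le ht.2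
  have h2 : Summable fun n : ℕ => ((n : ℝ) - meanK a t) ^ 2 * (a n * t ^ n) := by
    refine (((summable_moment hpos hconv ht 2).sub
      ((summable_mul_moment hpos hconv ht).mul_left (2 * meanK a t))).add
      (h0.mul_left (meanK a t ^ 2))).congr fun n => by ring
  rw [varK_eq_tsum hpos ha0 hconv ht]
  refine div_pos (h2.tsum_pos (fun n => by have := hpos n; have := ht.1; positivity) 0
    (by simpa using mul_pos (pow_pos hm 2) ha0)) (psum_pos hpos ha0 h0 ht.1.le)

theorem sdK_pos (hpos : ∀ n, 0 ≤ a n) (ha0 : 0 < a 0) (ha1 : ∃ n, 1 ≤ n ∧ 0 < a n)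
    (hconv : ∀ t : ℝ, 0 ≤ t → ENNReal.ofReal t < R → Summable fun n => a n * t ^ n)
    (ht : t ∈ Ioo0 R) : 0 < sdK a t :=
  Real.sqrt_pos.2 (varK_pos hpos ha0 ha1 hconv ht)

theorem hasDerivAt_meanK (hpos : ∀ n, 0 ≤ a n) (ha0 : 0 < a 0)
    (hconv : ∀ t : ℝ, 0 ≤ t → ENNReal.ofReal t < R → Summable fun n => a n * t ^ n)
    (ht : t ∈ Ioo0 R) : HasDerivAt (meanK a) (varK a t / t) t := by
  obtain ⟨s, hs, hts⟩ := exists_gt_mem_Ioo0 ht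
  have hf := (psum_pos hpos ha0 (hconv t ht.1.le ht.2) ht.1.le).ne'
  have h0 := hasDerivAt_tsum_mul_pow hpos (hconv s hs.1.le hs.2) ht.1 hts
  have h1 := hasDerivAt_tsum_mul_pow (b := fun n => (n : ℝ) * a n)
    (fun n => mul_nonneg n.cast_nonneg (hpos n)) (summable_mul_moment hpos hconv hs) ht.1 hts
  refine (h1.div h0 hf).congr_deriv ?_
  have hS2 : ∑' n : ℕ, (n : ℝ) * ((n : ℝ) * a n) * t ^ n = ∑' n : ℕ, (n : ℝ) ^ 2 * a n * t ^ n :=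
    tsum_congr fun n => by ring
  have hf' : ∑' n : ℕ, a n * t ^ n ≠ 0 := hf
  have := ht.1.ne'
  rw [hS2, varK, meanK]
  field_simp

theorem strictMonoOn_meanK (hpos : ∀ n, 0 ≤ a n) (ha0 : 0 < a 0) (ha1 : ∃ n, 1 ≤ n ∧ 0 < a n)
    (hconv : ∀ t : ℝ, 0 ≤ t → ENNReal.ofReal t < R → Summable fun n => a n * t ^ n) :
    StrictMonoOn (meanK a) (Ioo0 R) := by
  refine strictMonoOn_of_deriv_pos convex_Ioo0
    (fun x hx => (hasDerivAt_meanK hpos ha0 hconv hx).continuousAt.continuousWithinAt)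
    fun x hx => ?_
  rw [isOpen_Ioo0.interior_eq] at hx
  rw [(hasDerivAt_meanK hpos ha0 hconv hx).deriv]
  exact div_pos (varK_pos hpos ha0 ha1 hconv hx) hx.1

theorem continuousOn_meanK (hpos : ∀ n, 0 ≤ a n) (ha0 : 0 < a 0)
    (hconv : ∀ t : ℝ, 0 ≤ t → ENNReal.ofReal t < R → Summable fun n => a n * t ^ n)
    {c : ℝ} (hc : c ∈ Ioo0 R) : ContinuousOn (meanK a) (Set.Icc 0 c) :=
  (continuousOn_tsum_mul_pow (b := fun n => (n : ℝ) * a n)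
    (fun n => mul_nonneg n.cast_nonneg (hpos n)) (summable_mul_moment hpos hconv hc)).div
    (continuousOn_tsum_mul_pow hpos (hconv c hc.1.le hc.2)) fun x hx =>
      (psum_pos hpos ha0 (hconv x hx.1 (ofReal_lt_of_mem_Ioo0 hc hx.2)) hx.1).ne'

end MeanVariance

section Fourier

theorem norm_exp_I_mul_pow (θ : ℝ) (k : ℕ) : ‖Complex.exp (Complex.I * θ) ^ k‖ = 1 := by
  rw [norm_pow, Complex.norm_exp_I_mul_ofReal, one_pow]

theorem integral_exp_I_mul_pow_mul_exp_neg (k n : ℕ) :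
    ∫ θ in (-π)..π, Complex.exp (Complex.I * θ) ^ k * Complex.exp (-(Complex.I * n * θ)) =
      if k = n then 2 * (π : ℂ) else 0 := by
  have hexp : ∀ θ : ℝ, Complex.exp (Complex.I * θ) ^ k * Complex.exp (-(Complex.I * n * θ)) =
      Complex.exp (Complex.I * ((k : ℂ) - n) * θ) := fun θ => by
    rw [← Complex.exp_nat_mul, ← Complex.exp_add]; ring_nf
  simp_rw [hexp]
  split_ifs with hkn
  · simp [hkn]; ring
  · have hc : Complex.I * ((k : ℂ) - n) ≠ 0 :=
      mul_ne_zero Complex.I_ne_zero (sub_ne_zero.2 (by exact_mod_cast hkn))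
    rw [integral_exp_mul_complex hc, div_eq_zero_iff, sub_eq_zero]
    refine Or.inl (Complex.exp_eq_exp_iff_exists_int.2 ⟨(k : ℤ) - n, ?_⟩)
    push_cast; ring

theorem continuous_tsum_mul_exp_I_mul_pow {c : ℕ → ℂ} (hc : Summable fun k => ‖c k‖) :
    Continuous fun θ : ℝ => ∑' k, c k * Complex.exp (Complex.I * θ) ^ k :=
  continuous_tsum (fun k => by fun_prop) hc fun k θ => by
    rw [norm_mul, norm_exp_I_mul_pow, mul_one]

theorem integral_tsum_mul_exp_I_mul_pow {c : ℕ → ℂ} (hc : Summable fun k => ‖c k‖) (n : ℕ) :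
    ∫ θ in (-π)..π, (∑' k, c k * Complex.exp (Complex.I * θ) ^ k) *
      Complex.exp (-(Complex.I * n * θ)) = 2 * π * c n := by
  set F : ℕ → ℝ → ℂ := fun k θ =>
    c k * Complex.exp (Complex.I * θ) ^ k * Complex.exp (-(Complex.I * n * θ))
  have hnorm : ∀ k θ, ‖F k θ‖ = ‖c k‖ := fun k θ => by
    simp [F, Complex.norm_exp]
  have hlim : ∀ θ : ℝ, HasSum (fun k => F k θ) ((∑' k, c k * Complex.exp (Complex.I * θ) ^ k) *
      Complex.exp (-(Complex.I * n * θ))) := fun θ => by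
    have : Summable fun k => c k * Complex.exp (Complex.I * θ) ^ k :=
      Summable.of_norm_bounded hc fun k => by rw [norm_mul, norm_exp_I_mul_pow, mul_one]
    exact this.hasSum.mul_right _
  have hsum := intervalIntegral.hasSum_integral_of_dominated_convergence (μ := volume)
    (a := -π) (b := π) (fun k _ => ‖c k‖)
    (fun k => (by fun_prop : Continuous (F k)).aestronglyMeasurable)
    (fun k => ae_of_all _ fun θ _ => (hnorm k θ).le) (ae_of_all _ fun _ _ => hc)
    intervalIntegrable_const (ae_of_all _ fun θ _ => hlim θ)
  have hterm : ∀ k, ∫ θ in (-π)..π, F k θ = if k = n then 2 * π * c n else 0 := fun k => by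
    simp only [F, mul_assoc (c k), intervalIntegral.integral_const_mul,
      integral_exp_I_mul_pow_mul_exp_neg]
    split_ifs with hkn
    · rw [hkn, mul_comm]
    · exact mul_zero _
  rw [funext hterm] at hsum
  exact hsum.unique (hasSum_ite_eq n _)

end Fourier

section Gaussian

theorem integrable_exp_neg_sq_div_two : Integrable fun θ : ℝ => Real.exp (-θ ^ 2 / 2) := by
  simpa [neg_div, div_eq_inv_mul] using integrable_exp_neg_mul_sq (b := 1 / 2) (by norm_num)

theorem integral_exp_neg_sq_div_two : ∫ θ : ℝ, Real.exp (-θ ^ 2 / 2) = √(2 * π) := by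
  have h := integral_gaussian (1 / 2)
  rw [show π / (1 / 2) = 2 * π by ring] at h
  simpa [neg_div, div_eq_inv_mul] using h

theorem intervalIntegral_exp_neg_sq_div_two_le {c d : ℝ} (hcd : c ≤ d) :
    ∫ θ in c..d, Real.exp (-θ ^ 2 / 2) ≤ √(2 * π) := by
  rw [intervalIntegral.integral_of_le hcd, ← integral_exp_neg_sq_div_two]
  exact setIntegral_le_integral integrable_exp_neg_sq_div_two
    (Eventually.of_forall fun θ => (Real.exp_pos _).le)

theorem tendsto_intervalIntegral_exp_neg_sq_div_two :
    Tendsto (fun T => ∫ θ in (-T)..T, Real.exp (-θ ^ 2 / 2)) atTop (𝓝 (√(2 * π))) := by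
  rw [← integral_exp_neg_sq_div_two]
  exact intervalIntegral_tendsto_integral integrable_exp_neg_sq_div_two tendsto_neg_atTop_atBot
    tendsto_id

end Gaussian

section CharacteristicFunction

def gaussError (a : ℕ → ℝ) (t : ℝ) : ℝ :=
  ∫ θ in (-(π * sdK a t))..(π * sdK a t), ‖charN a t θ - ((Real.exp (-θ ^ 2 / 2) : ℝ) : ℂ)‖

theorem Fc_ofReal (a : ℕ → ℝ) (t : ℝ) : Fc a t = psum a t := by
  rw [Fc, psum, Complex.ofReal_tsum]
  push_cast
  rfl

theorem Fc_mul_exp_I_mul (a : ℕ → ℝ) (t x : ℝ) :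
    Fc a (t * Complex.exp (Complex.I * x)) =
      ∑' k, (a k : ℂ) * (t : ℂ) ^ k * Complex.exp (Complex.I * x) ^ k :=
  tsum_congr fun k => by rw [mul_pow, mul_assoc]

variable {a : ℕ → ℝ} {t : ℝ}

theorem summable_norm_coeff (hpos : ∀ n, 0 ≤ a n) (hs : Summable fun n => a n * t ^ n)
    (ht : 0 ≤ t) : Summable fun k => ‖(a k : ℂ) * (t : ℂ) ^ k‖ :=
  hs.congr fun k => by
    rw [norm_mul, norm_pow, Complex.norm_real, Complex.norm_real, Real.norm_of_nonneg (hpos k),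
      Real.norm_of_nonneg ht]

theorem integral_Fc_mul_exp_neg (hpos : ∀ n, 0 ≤ a n) (hs : Summable fun n => a n * t ^ n)
    (ht : 0 ≤ t) (n : ℕ) :
    ∫ θ in (-π)..π, Fc a (t * Complex.exp (Complex.I * θ)) * Complex.exp (-(Complex.I * n * θ)) =
      2 * π * ((a n : ℂ) * (t : ℂ) ^ n) := by
  simp_rw [Fc_mul_exp_I_mul]
  exact integral_tsum_mul_exp_I_mul_pow (summable_norm_coeff hpos hs ht) n

theorem continuous_charN (hpos : ∀ n, 0 ≤ a n) (hs : Summable fun n => a n * t ^ n)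
    (ht : 0 ≤ t) : Continuous (charN a t) := by
  unfold charN
  simp_rw [Fc_mul_exp_I_mul]
  exact (((continuous_tsum_mul_exp_I_mul_pow (summable_norm_coeff hpos hs ht)).comp
    (continuous_id.div_const _)).div_const _).mul (by fun_prop)

theorem integral_charN_mul_exp (hpos : ∀ n, 0 ≤ a n) (hs : Summable fun n => a n * t ^ n)
    (ht : 0 ≤ t) (hσ : 0 < sdK a t) (n : ℕ) :
    ∫ u in (-(π * sdK a t))..(π * sdK a t),
        charN a t u * Complex.exp (Complex.I * (((meanK a t - n) * u / sdK a t : ℝ) : ℂ)) =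
      ((2 * π * sdK a t * (a n * t ^ n) / psum a t : ℝ) : ℂ) := by
  set σ := sdK a t
  set m := meanK a t
  have hg : ∀ x : ℝ,
      charN a t (σ * x) * Complex.exp (Complex.I * (((m - n) * (σ * x) / σ : ℝ) : ℂ)) =
        Fc a (t * Complex.exp (Complex.I * x)) * Complex.exp (-(Complex.I * n * x)) /
          psum a t := fun x => by
    have h1 : σ * x / σ = x := by field_simp
    have h2 : (m - n) * (σ * x) / σ = (m - n) * x := by field_simp
    have h3 : σ * x * m / σ = x * m := by field_simp
    rw [charN, h1, h2, h3, Fc_ofReal, mul_div_right_comm, mul_assoc, ← Complex.exp_add]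
    congr 3
    push_cast; ring
  have hsub := intervalIntegral.integral_comp_mul_left (a := -π) (b := π)
    (fun u => charN a t u * Complex.exp (Complex.I * (((m - n) * u / σ : ℝ) : ℂ))) hσ.ne'
  simp only [hg, intervalIntegral.integral_div, integral_Fc_mul_exp_neg hpos hs ht] at hsub
  rw [mul_neg, mul_comm σ π, eq_inv_smul_iff₀ hσ.ne'] at hsub
  rw [← hsub, Complex.real_smul]
  push_cast
  ring

end CharacteristicFunction

section Estimates

variable {a : ℕ → ℝ} {R : ℝ≥0∞} {t : ℝ}

theorem norm_sub_integral_gaussian_le (hpos : ∀ n, 0 ≤ a n) (hs : Summable fun n => a n * t ^ n)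
    (ht : 0 ≤ t) (hσ : 0 < sdK a t) (n : ℕ) :
    ‖((2 * π * sdK a t * (a n * t ^ n) / psum a t : ℝ) : ℂ) -
        ∫ u in (-(π * sdK a t))..(π * sdK a t), ((Real.exp (-u ^ 2 / 2) : ℝ) : ℂ) *
          Complex.exp (Complex.I * (((meanK a t - n) * u / sdK a t : ℝ) : ℂ))‖ ≤
      gaussError a t := by
  have hle : -(π * sdK a t) ≤ π * sdK a t := neg_le_self (by positivity)
  have hc := continuous_charN hpos hs ht
  rw [← integral_charN_mul_exp hpos hs ht hσ n, ← intervalIntegral.integral_sub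
    ((by fun_prop : Continuous fun u : ℝ => charN a t u *
      Complex.exp (Complex.I * (((meanK a t - n) * u / sdK a t : ℝ) : ℂ))).intervalIntegrable _ _)
    ((by fun_prop : Continuous fun u : ℝ => ((Real.exp (-u ^ 2 / 2) : ℝ) : ℂ) *
      Complex.exp (Complex.I * (((meanK a t - n) * u / sdK a t : ℝ) : ℂ))).intervalIntegrable _ _)]
  refine (intervalIntegral.norm_integral_le_integral_norm hle).trans_eq
    (intervalIntegral.integral_congr fun u _ => ?_)
  rw [← sub_mul, norm_mul, Complex.norm_exp_I_mul_ofReal, mul_one]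

theorem mul_pow_le_mul_psum (hpos : ∀ n, 0 ≤ a n) (ha0 : 0 < a 0)
    (hs : Summable fun n => a n * t ^ n) (ht : 0 ≤ t) (hσ : 0 < sdK a t) (n : ℕ) :
    a n * t ^ n ≤ (gaussError a t + √(2 * π)) / (2 * π * sdK a t) * psum a t := by
  have hf := psum_pos hpos ha0 hs ht
  have hle : -(π * sdK a t) ≤ π * sdK a t := neg_le_self (by positivity)
  have hgauss : ‖∫ u in (-(π * sdK a t))..(π * sdK a t), ((Real.exp (-u ^ 2 / 2) : ℝ) : ℂ) *
      Complex.exp (Complex.I * (((meanK a t - n) * u / sdK a t : ℝ) : ℂ))‖ ≤ √(2 * π) := by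
    refine (intervalIntegral.norm_integral_le_integral_norm hle).trans (le_of_eq_of_le
      (intervalIntegral.integral_congr fun u _ => ?_) (intervalIntegral_exp_neg_sq_div_two_le hle))
    rw [norm_mul, Complex.norm_exp_I_mul_ofReal, mul_one, Complex.norm_real,
      Real.norm_of_nonneg (Real.exp_pos _).le]
  have hcoeff := (norm_le_norm_sub_add _ _).trans
    (add_le_add (norm_sub_integral_gaussian_le hpos hs ht hσ n) hgauss)
  have := hpos n
  rw [Complex.norm_real, Real.norm_of_nonneg (by positivity), div_le_iff₀ hf] at hcoeff
  rw [div_mul_eq_mul_div, le_div_iff₀ (by positivity)]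
  linarith

theorem one_sub_meanK_div_mul_psum_le (hpos : ∀ n, 0 ≤ a n) (ha0 : 0 < a 0)
    (hconv : ∀ t : ℝ, 0 ≤ t → ENNReal.ofReal t < R → Summable fun n => a n * t ^ n)
    (ht : t ∈ Ioo0 R) {N : ℕ} (hN : 0 < N) :
    (1 - meanK a t / N) * psum a t ≤ ∑ k ∈ Finset.range N, a k * t ^ k := by
  have h0 := hconv t ht.1.le ht.2
  have h1 := summable_mul_moment hpos hconv ht
  have hf := psum_pos hpos ha0 h0 ht.1.le
  have hN' : (0 : ℝ) < N := Nat.cast_pos.2 hN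
  have hhead : Summable fun k => if k < N then a k * t ^ k else 0 :=
    summable_of_ne_finset_zero (s := Finset.range N) fun k hk => if_neg (by simpa using hk)
  have hpt : ∀ k, a k * t ^ k ≤ (if k < N then a k * t ^ k else 0) + (k : ℝ) * a k * t ^ k / N :=
    fun k => by
      have := hpos k
      have := ht.1
      split_ifs with hk
      · exact le_add_of_nonneg_right (by positivity)
      · rw [zero_add, le_div_iff₀ hN']
        have : (N : ℝ) ≤ k := by exact_mod_cast not_lt.1 hk
        nlinarith [mul_nonneg (hpos k) (pow_nonneg ht.1.le k)]
  have hsum := h0.tsum_le_tsum hpt (hhead.add (h1.div_const _))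
  rw [hhead.tsum_add (h1.div_const _), tsum_div_const, tsum_mul_moment_eq hf.ne',
    tsum_eq_sum (s := Finset.range N) fun k hk => if_neg (by simpa using hk),
    Finset.sum_congr rfl fun k hk => if_pos (by simpa using hk)] at hsum
  change psum a t ≤ _ at hsum
  have : meanK a t / N * psum a t = meanK a t * psum a t / N := by ring
  nlinarith

theorem one_sub_meanK_div_le (hpos : ∀ n, 0 ≤ a n) (ha0 : 0 < a 0)
    (hconv : ∀ t : ℝ, 0 ≤ t → ENNReal.ofReal t < R → Summable fun n => a n * t ^ n)
    (ht : t ∈ Ioo0 R) (hσ : 0 < sdK a t) {N : ℕ} (hN : 0 < N) :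
    1 - meanK a t / N ≤ N * ((gaussError a t + √(2 * π)) / (2 * π * sdK a t)) := by
  have h0 := hconv t ht.1.le ht.2
  have hf := psum_pos hpos ha0 h0 ht.1.le
  have h := (one_sub_meanK_div_mul_psum_le hpos ha0 hconv ht hN).trans
    (Finset.sum_le_sum fun k _ => mul_pow_le_mul_psum hpos ha0 h0 ht.1.le hσ k)
  rw [Finset.sum_const, Finset.card_range, nsmul_eq_mul, ← mul_assoc] at h
  exact le_of_mul_le_mul_right h hf

end Estimates

section Asymptotics

variable {a : ℕ → ℝ} {R : ℝ≥0∞}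

theorem tendsto_meanK (hR : 0 < R) (hpos : ∀ n, 0 ≤ a n) (ha0 : 0 < a 0)
    (hconv : ∀ t : ℝ, 0 ≤ t → ENNReal.ofReal t < R → Summable fun n => a n * t ^ n)
    (hSG : StronglyGaussian a R) : Tendsto (meanK a) (nhdsUpto R) atTop := by
  obtain ⟨hsd, hE⟩ := hSG
  have hε : Tendsto (fun t => (gaussError a t + √(2 * π)) / (2 * π * sdK a t)) (nhdsUpto R)
      (𝓝 0) := (hE.add_const _).div_atTop (hsd.const_mul_atTop (by positivity))
  -- With `ε` the function in `hε`: once `N ε(t) < 1/2`, the bound `1 - m_f(t)/N ≤ N ε(t)`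
  -- gives `m_f(t) > N/2 ≥ y`.
  refine tendsto_atTop.2 fun y => ?_
  obtain ⟨N, hN⟩ := exists_nat_ge (max (2 * y) 1)
  have hN1 : (1 : ℝ) ≤ N := (le_max_right _ _).trans hN
  have hN0 : 0 < N := by exact_mod_cast zero_lt_one.trans_le hN1
  filter_upwards [eventually_mem_Ioo0 hR, hsd.eventually_gt_atTop 0,
    hε.eventually (gt_mem_nhds (by positivity : (0 : ℝ) < 1 / (2 * N)))] with t ht hσ hεt
  have hbound := one_sub_meanK_div_le hpos ha0 hconv ht hσ hN0
  have hhalf : (N : ℝ) * ((gaussError a t + √(2 * π)) / (2 * π * sdK a t)) < 1 / 2 := by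
    calc _ < (N : ℝ) * (1 / (2 * N)) := by gcongr
      _ = 1 / 2 := by field_simp
  have : 1 / 2 < meanK a t / N := by linarith
  rw [lt_div_iff₀ (by positivity)] at this
  linarith [le_max_left (2 * y) 1]

theorem existsUnique_meanK_eq (hR : 0 < R) (hpos : ∀ n, 0 ≤ a n) (ha0 : 0 < a 0)
    (ha1 : ∃ n, 1 ≤ n ∧ 0 < a n)
    (hconv : ∀ t : ℝ, 0 ≤ t → ENNReal.ofReal t < R → Summable fun n => a n * t ^ n)
    (hmean : Tendsto (meanK a) (nhdsUpto R) atTop) {y : ℝ} (hy : 0 < y) :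
    ∃! t, t ∈ Ioo0 R ∧ meanK a t = y := by
  have := nhdsUpto_neBot (R := R)
  obtain ⟨c, hc, hyc⟩ := ((eventually_mem_Ioo0 hR).and (hmean.eventually_gt_atTop y)).exists
  obtain ⟨t, ht, hty⟩ := intermediate_value_Icc hc.1.le (continuousOn_meanK hpos ha0 hconv hc)
    ⟨meanK_zero.trans_le hy.le, hyc.le⟩
  have ht0 : 0 < t := ht.1.lt_of_ne fun h => by rw [← h, meanK_zero] at hty; linarith
  have htR : t ∈ Ioo0 R := ⟨ht0, ofReal_lt_of_mem_Ioo0 hc ht.2⟩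
  exact ⟨t, ⟨htR, hty⟩, fun u hu =>
    (strictMonoOn_meanK hpos ha0 ha1 hconv).injOn hu.1 htR (hu.2.trans hty.symm)⟩

theorem tendsto_nhdsUpto_of_tendsto_meanK {ι : Type*} {l : Filter ι} {u : ι → ℝ} (hR : 0 < R)
    (hpos : ∀ n, 0 ≤ a n) (ha0 : 0 < a 0) (ha1 : ∃ n, 1 ≤ n ∧ 0 < a n)
    (hconv : ∀ t : ℝ, 0 ≤ t → ENNReal.ofReal t < R → Summable fun n => a n * t ^ n)
    (hmem : ∀ᶠ x in l, u x ∈ Ioo0 R) (hmean : Tendsto (fun x => meanK a (u x)) l atTop) :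
    Tendsto u l (nhdsUpto R) :=
  tendsto_nhdsUpto hR hmem fun c hc => by
    filter_upwards [hmem, hmean.eventually_gt_atTop (meanK a c)] with x hx hlt
    exact ((strictMonoOn_meanK hpos ha0 ha1 hconv).lt_iff_lt hc hx).1 hlt

theorem abs_sub_integral_gaussian_le {t : ℝ} (hpos : ∀ n, 0 ≤ a n)
    (hs : Summable fun n => a n * t ^ n) (ht : 0 ≤ t) (hσ : 0 < sdK a t) {n : ℕ}
    (hm : meanK a t = n) :
    |a n * √(2 * π) * sdK a t * t ^ n / psum a t -
        (∫ u in (-(π * sdK a t))..(π * sdK a t), Real.exp (-u ^ 2 / 2)) / √(2 * π)| ≤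
      gaussError a t / √(2 * π) := by
  have h := norm_sub_integral_gaussian_le hpos hs ht hσ n
  simp only [hm, sub_self, zero_mul, zero_div, Complex.ofReal_zero, mul_zero, Complex.exp_zero,
    mul_one] at h
  rw [intervalIntegral.integral_ofReal, ← Complex.ofReal_sub, Complex.norm_real,
    Real.norm_eq_abs] at h
  have h2π : 0 < √(2 * π) := by positivity
  have hsq : √(2 * π) * √(2 * π) = 2 * π := Real.mul_self_sqrt (by positivity)
  have key : a n * √(2 * π) * sdK a t * t ^ n / psum a t -
        (∫ u in (-(π * sdK a t))..(π * sdK a t), Real.exp (-u ^ 2 / 2)) / √(2 * π) =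
      (2 * π * sdK a t * (a n * t ^ n) / psum a t -
        ∫ u in (-(π * sdK a t))..(π * sdK a t), Real.exp (-u ^ 2 / 2)) / √(2 * π) := by
    rw [eq_div_iff h2π.ne', sub_mul, div_mul_cancel₀ _ h2π.ne']
    congr 1
    calc _ = a n * (√(2 * π) * √(2 * π)) * sdK a t * t ^ n / psum a t := by ring
      _ = _ := by rw [hsq]; ring
  rw [key, abs_div, abs_of_pos h2π]
  exact div_le_div_of_nonneg_right h h2π.le

theorem tendsto_hayman_ratio (hpos : ∀ n, 0 ≤ a n) (ha0 : 0 < a 0) (ha1 : ∃ n, 1 ≤ n ∧ 0 < a n)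
    (hconv : ∀ t : ℝ, 0 ≤ t → ENNReal.ofReal t < R → Summable fun n => a n * t ^ n)
    (hSG : StronglyGaussian a R) {ts : ℕ → ℝ} (hlim : Tendsto ts atTop (nhdsUpto R))
    (hts : ∀ᶠ n in atTop, ts n ∈ Ioo0 R ∧ meanK a (ts n) = n) :
    Tendsto (fun n => a n * √(2 * π) * sdK a (ts n) * ts n ^ n / psum a (ts n)) atTop (𝓝 1) := by
  have h2π : √(2 * π) ≠ 0 := by positivity
  have hgauss : Tendsto (fun n => (∫ u in (-(π * sdK a (ts n)))..(π * sdK a (ts n)),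
      Real.exp (-u ^ 2 / 2)) / √(2 * π)) atTop (𝓝 1) := by
    have := (tendsto_intervalIntegral_exp_neg_sq_div_two.comp
      ((hSG.1.comp hlim).const_mul_atTop Real.pi_pos)).div_const (√(2 * π))
    rwa [div_self h2π] at this
  have herror : Tendsto (fun n => gaussError a (ts n) / √(2 * π)) atTop (𝓝 0) := by
    have := (hSG.2.comp hlim).div_const (√(2 * π))
    rwa [zero_div] at this
  refine hgauss.congr_dist (squeeze_zero' (Eventually.of_forall fun n => dist_nonneg) ?_ herror)
  filter_upwards [hts] with n ⟨hmem, hm⟩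
  rw [dist_comm, Real.dist_eq]
  exact abs_sub_integral_gaussian_le hpos (hconv _ hmem.1.le hmem.2) hmem.1.le
    (sdK_pos hpos ha0 ha1 hconv hmem) hm

end Asymptotics

end Hayman

theorem statement13_general (a : ℕ → ℝ) (R : ℝ≥0∞) (hR : 0 < R)
    (hpos : ∀ n, 0 ≤ a n) (ha0 : 0 < a 0) (ha1 : ∃ n, 1 ≤ n ∧ 0 < a n)
    (hconv : ∀ t : ℝ, 0 ≤ t → ENNReal.ofReal t < R → Summable fun n => a n * t ^ n)
    (hSG : StronglyGaussian a R) :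
    Tendsto (meanK a) (nhdsUpto R) atTop ∧
    (∀ n : ℕ, 1 ≤ n →
      ∃! t : ℝ, (0 < t ∧ ENNReal.ofReal t < R) ∧ meanK a t = (n : ℝ)) ∧
    (∀ ts : ℕ → ℝ,
      (∀ n : ℕ, 1 ≤ n → (0 < ts n ∧ ENNReal.ofReal (ts n) < R) ∧ meanK a (ts n) = (n : ℝ)) →
      Tendsto
        (fun n : ℕ =>
          a n * Real.sqrt (2 * Real.pi) * sdK a (ts n) * ts n ^ n / psum a (ts n))
        atTop (𝓝 1)) := by
  have hmean := Hayman.tendsto_meanK hR hpos ha0 hconv hSG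
  refine ⟨hmean, fun n hn => Hayman.existsUnique_meanK_eq hR hpos ha0 ha1 hconv hmean
    (Nat.cast_pos.2 hn), fun ts hts => ?_⟩
  have hts' : ∀ᶠ n in atTop, ts n ∈ Hayman.Ioo0 R ∧ meanK a (ts n) = n :=
    eventually_atTop.2 ⟨1, hts⟩
  have hlim : Tendsto ts atTop (nhdsUpto R) :=
    Hayman.tendsto_nhdsUpto_of_tendsto_meanK hR hpos ha0 ha1 hconv (hts'.mono fun _ h => h.1)
      (tendsto_natCast_atTop_atTop.congr' (hts'.mono fun _ h => h.2.symm))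
  exact Hayman.tendsto_hayman_ratio hpos ha0 ha1 hconv hSG hlim hts'

/-- Hayman's asymptotic formula, Corollary 3.2.5 and Corollary 3.2.4.
If `f ∈ K` with radius of convergence `R > 0` is strongly Gaussian, then
`M_f = lim_{t↑R} m_f(t) = +∞`, for each `n ≥ 1` there is a unique `t_n ∈ (0,R)` with
`m_f(t_n) = n`, and `a_n ~ f(t_n)/(√(2π)·σ_f(t_n)·t_nⁿ)` as `n → ∞`. -/
theorem statement13 (a : ℕ → ℝ) (R : ℝ≥0∞) (hR : 0 < R)
    (hpos : ∀ n, 0 ≤ a n) (ha0 : 0 < a 0) (ha1 : ∃ n, 1 ≤ n ∧ 0 < a n)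
    (hconv : ∀ t : ℝ, 0 ≤ t → ENNReal.ofReal t < R → Summable fun n => a n * t ^ n)
    (hdiv : ∀ t : ℝ, R < ENNReal.ofReal t → ¬ Summable fun n => a n * t ^ n)
    (hSG : StronglyGaussian a R) :
    Tendsto (meanK a) (nhdsUpto R) atTop ∧
    (∀ n : ℕ, 1 ≤ n →
      ∃! t : ℝ, (0 < t ∧ ENNReal.ofReal t < R) ∧ meanK a t = (n : ℝ)) ∧
    (∀ ts : ℕ → ℝ,
      (∀ n : ℕ, 1 ≤ n → (0 < ts n ∧ ENNReal.ofReal (ts n) < R) ∧ meanK a (ts n) = (n : ℝ)) →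
      Tendsto
        (fun n : ℕ =>
          a n * Real.sqrt (2 * Real.pi) * sdK a (ts n) * ts n ^ n / psum a (ts n))
        atTop (𝓝 1)) :=
  statement13_general a R hR hpos ha0 ha1 hconv hSG
end
end
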